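/- arXiv:2301.09604 — 6 statements merged into one kernel-verified Lean document; each statement's English description precedes it below -/
import Mathlib

section
/- Let w, w*, w_1, …, w_M ∈ ℝ^d satisfy the approximate projection condition (1/M) Σ_{i=1}^M ‖w_i − w*‖² ≤ ‖w − w*‖². Define Δ_i = w − w_i and Δ̄ = (1/M) Σ_{i=1}^M Δ_i. Then ⟨w − w*, Δ̄⟩ ≥ (1/(2M)) Σ_{i=1}^M ‖Δ_i‖². Consequently, if Δ̄ ≠ 0, the unique minimizer η_opt = ⟨w − w*, Δ̄⟩ / ‖Δ̄‖² of the function η ↦ ‖w − ηΔ̄ − w*‖² satisfies η_opt ≥ Σ_{i=1}^M ‖Δ_i‖² / (2M ‖Δ̄‖²). -/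
open scoped RealInnerProductSpace

/-!
Expanding `‖wᵢ - w*‖² = ‖(w - w*) - Δᵢ‖²` and averaging turns the approximate projection condition
into `∑ ‖Δᵢ‖² ≤ 2 ∑ ⟪w - w*, Δᵢ⟫`, which is the first claim after dividing by `2M`. The rest is
the quadratic `η ↦ ‖v - η u‖²`, which equals `‖v - η₀ u‖² + (η - η₀)² ‖u‖²` with
`η₀ = ⟪v, u⟫ / ‖u‖²`; dividing the first claim by `‖Δ̄‖²` bounds `η₀` from below.
-/

open Finset

variable {E : Type*} [NormedAddCommGroup E] [InnerProductSpace ℝ E]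

section Average

variable {ι : Type*} [Fintype ι] {v : E} {Δ : ι → E}

theorem sum_norm_sub_sq_eq (v : E) (Δ : ι → E) :
    ∑ i, ‖v - Δ i‖ ^ 2 =
      Fintype.card ι * ‖v‖ ^ 2 - 2 * ∑ i, ⟪v, Δ i⟫ + ∑ i, ‖Δ i‖ ^ 2 := by
  simp only [norm_sub_sq_real, sum_add_distrib, sum_sub_distrib, sum_const, card_univ,
    nsmul_eq_mul, mul_sum]

theorem sum_norm_sq_le_two_mul_sum_inner
    (h : (1 / (Fintype.card ι : ℝ)) * ∑ i, ‖v - Δ i‖ ^ 2 ≤ ‖v‖ ^ 2) :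
    ∑ i, ‖Δ i‖ ^ 2 ≤ 2 * ∑ i, ⟪v, Δ i⟫ := by
  cases isEmpty_or_nonempty ι
  · simp
  · have hcard : (0 : ℝ) < Fintype.card ι := by exact_mod_cast Fintype.card_pos
    rw [one_div, inv_mul_le_iff₀ hcard, sum_norm_sub_sq_eq] at h
    linarith

theorem le_inner_mean
    (h : (1 / (Fintype.card ι : ℝ)) * ∑ i, ‖v - Δ i‖ ^ 2 ≤ ‖v‖ ^ 2) :
    (1 / (2 * (Fintype.card ι : ℝ))) * ∑ i, ‖Δ i‖ ^ 2 ≤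
      ⟪v, (1 / (Fintype.card ι : ℝ)) • ∑ i, Δ i⟫ :=
  calc (1 / (2 * (Fintype.card ι : ℝ))) * ∑ i, ‖Δ i‖ ^ 2
      ≤ (1 / (2 * (Fintype.card ι : ℝ))) * (2 * ∑ i, ⟪v, Δ i⟫) := by
        gcongr
        exact sum_norm_sq_le_two_mul_sum_inner h
    _ = ⟪v, (1 / (Fintype.card ι : ℝ)) • ∑ i, Δ i⟫ := by
        rw [inner_smul_right, inner_sum]
        field_simp

end Average

section LineSearch

variable {v u : E}

theorem norm_sub_smul_sq_eq (hu : u ≠ 0) (η : ℝ) :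
    ‖v - η • u‖ ^ 2 =
      ‖v - (⟪v, u⟫ / ‖u‖ ^ 2) • u‖ ^ 2 + (η - ⟪v, u⟫ / ‖u‖ ^ 2) ^ 2 * ‖u‖ ^ 2 := by
  have hu2 : ‖u‖ ^ 2 ≠ 0 := by positivity
  simp only [norm_sub_sq_real, inner_smul_right, norm_smul, mul_pow, Real.norm_eq_abs, sq_abs]
  field_simp
  ring

theorem norm_sub_smul_sq_le (hu : u ≠ 0) (η : ℝ) :
    ‖v - (⟪v, u⟫ / ‖u‖ ^ 2) • u‖ ^ 2 ≤ ‖v - η • u‖ ^ 2 := by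
  rw [norm_sub_smul_sq_eq hu η]
  exact le_add_of_nonneg_right (by positivity)

theorem eq_of_forall_norm_sub_smul_sq_le (hu : u ≠ 0) {η : ℝ}
    (hη : ∀ η' : ℝ, ‖v - η • u‖ ^ 2 ≤ ‖v - η' • u‖ ^ 2) :
    η = ⟪v, u⟫ / ‖u‖ ^ 2 := by
  have hmin := hη (⟪v, u⟫ / ‖u‖ ^ 2)
  rw [norm_sub_smul_sq_eq hu η] at hmin
  have hu2 : 0 < ‖u‖ ^ 2 := by positivity
  have hsq : (η - ⟪v, u⟫ / ‖u‖ ^ 2) ^ 2 = 0 :=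
    le_antisymm (nonpos_of_mul_nonpos_left (by linarith) hu2) (sq_nonneg _)
  exact sub_eq_zero.mp (pow_eq_zero_iff two_ne_zero |>.mp hsq)

end LineSearch

theorem eta_opt_lower_bound_general {d M : ℕ}
    (w wstar : EuclideanSpace ℝ (Fin d)) (wi : Fin M → EuclideanSpace ℝ (Fin d))
    (hproj : (1 / (M : ℝ)) * ∑ i, ‖wi i - wstar‖ ^ 2 ≤ ‖w - wstar‖ ^ 2)
    (Δ : Fin M → EuclideanSpace ℝ (Fin d)) (hΔ : ∀ i, Δ i = w - wi i)
    (Δbar : EuclideanSpace ℝ (Fin d)) (hΔbar : Δbar = (1 / (M : ℝ)) • ∑ i, Δ i) :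
    ⟪w - wstar, Δbar⟫ ≥ (1 / (2 * (M : ℝ))) * ∑ i, ‖Δ i‖ ^ 2 ∧
    (Δbar ≠ 0 →
      (∀ η : ℝ,
        ‖w - (⟪w - wstar, Δbar⟫ / ‖Δbar‖ ^ 2) • Δbar - wstar‖ ^ 2 ≤
          ‖w - η • Δbar - wstar‖ ^ 2) ∧
      (∀ η : ℝ, (∀ η' : ℝ, ‖w - η • Δbar - wstar‖ ^ 2 ≤ ‖w - η' • Δbar - wstar‖ ^ 2) →
        η = ⟪w - wstar, Δbar⟫ / ‖Δbar‖ ^ 2) ∧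
      ⟪w - wstar, Δbar⟫ / ‖Δbar‖ ^ 2 ≥
        (∑ i, ‖Δ i‖ ^ 2) / (2 * (M : ℝ) * ‖Δbar‖ ^ 2)) := by
  have hwi : ∀ i, wi i - wstar = (w - wstar) - Δ i := fun i => by
    rw [hΔ, sub_sub_sub_cancel_left]
  simp only [hwi] at hproj
  have hmean : (1 / (2 * (M : ℝ))) * ∑ i, ‖Δ i‖ ^ 2 ≤ ⟪w - wstar, Δbar⟫ := by
    simpa only [hΔbar, Fintype.card_fin] using
      le_inner_mean (ι := Fin M) (by rwa [Fintype.card_fin])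
  refine ⟨hmean, fun hne => ?_⟩
  simp_rw [sub_right_comm w _ wstar]
  refine ⟨norm_sub_smul_sq_le hne, fun η hη => eq_of_forall_norm_sub_smul_sq_le hne hη, ?_⟩
  rw [ge_iff_le, ← div_div]
  gcongr
  rwa [one_div_mul_eq_div] at hmean

/-- Under the approximate projection condition, the inner product of `w - wstar` with the
average pseudo-gradient is at least half the average squared pseudo-gradient norm; hence the
unique minimizer of `η ↦ ‖w - η • Δ̄ - wstar‖²` is lower bounded by
`(∑ i, ‖Δ i‖²) / (2 M ‖Δ̄‖²)` whenever `Δ̄ ≠ 0`. -/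
theorem eta_opt_lower_bound {d M : ℕ} (hM : 0 < M)
    (w wstar : EuclideanSpace ℝ (Fin d)) (wi : Fin M → EuclideanSpace ℝ (Fin d))
    (hproj : (1 / (M : ℝ)) * ∑ i, ‖wi i - wstar‖ ^ 2 ≤ ‖w - wstar‖ ^ 2)
    (Δ : Fin M → EuclideanSpace ℝ (Fin d)) (hΔ : ∀ i, Δ i = w - wi i)
    (Δbar : EuclideanSpace ℝ (Fin d)) (hΔbar : Δbar = (1 / (M : ℝ)) • ∑ i, Δ i) :
    ⟪w - wstar, Δbar⟫ ≥ (1 / (2 * (M : ℝ))) * ∑ i, ‖Δ i‖ ^ 2 ∧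
    (Δbar ≠ 0 →
      (∀ η : ℝ,
        ‖w - (⟪w - wstar, Δbar⟫ / ‖Δbar‖ ^ 2) • Δbar - wstar‖ ^ 2 ≤
          ‖w - η • Δbar - wstar‖ ^ 2) ∧
      (∀ η : ℝ, (∀ η' : ℝ, ‖w - η • Δbar - wstar‖ ^ 2 ≤ ‖w - η' • Δbar - wstar‖ ^ 2) →
        η = ⟪w - wstar, Δbar⟫ / ‖Δbar‖ ^ 2) ∧
      ⟪w - wstar, Δbar⟫ / ‖Δbar‖ ^ 2 ≥
        (∑ i, ‖Δ i‖ ^ 2) / (2 * (M : ℝ) * ‖Δbar‖ ^ 2)) :=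
  eta_opt_lower_bound_general w wstar wi hproj Δ hΔ Δbar hΔbar
end

section
/- (Theorem 1, convex convergence of FedExP, with explicit constants.) Let F_1, …, F_M : ℝ^d → ℝ be convex, differentiable and L-smooth, let F = (1/M)Σ_{i=1}^M F_i, let w* be a minimizer of F, and assume (1/M) Σ_{i=1}^M ‖∇F_i(w*)‖² ≤ σ*². Fix τ ≥ 1 and 0 < η_l ≤ 1/(6τL). Starting from w^{(0)} ∈ ℝ^d, for each round t = 0,…,T−1 define local full-batch gradient descent iterates w_i^{(t,0)} = w^{(t)}, w_i^{(t,k+1)} = w_i^{(t,k)} − η_l ∇F_i(w_i^{(t,k)}) for k = 0,…,τ−1, client updates Δ_i^{(t)} = w^{(t)} − w_i^{(t,τ)}, average update Δ̄^{(t)} = (1/M)Σ_{i=1}^M Δ_i^{(t)}, and server update w^{(t+1)} = w^{(t)} − η_g^{(t)} Δ̄^{(t)}, where the server step sizes satisfy η_g^{(t)} ≥ 1 and M η_g^{(t)} ‖Δ̄^{(t)}‖² ≤ Σ_{i=1}^M ‖Δ_i^{(t)}‖² for every t (as holds for the FedExP step size max{1, Σ_i ‖Δ_i^{(t)}‖²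 / (2M‖Δ̄^{(t)}‖²)}). Then (Σ_{t=0}^{T−1} η_g^{(t)} (F(w^{(t)}) − F(w*))) / (Σ_{t=0}^{T−1} η_g^{(t)}) ≤ 3‖w^{(0)} − w*‖² / (η_l τ Σ_{t=0}^{T−1} η_g^{(t)}) + 9 η_l τ σ*² + 36 η_l² τ(τ−1) L σ*². -/
/-!
Gradient descent on a convex `L`-smooth function with step `η ≤ 2 / L` never increases the
gradient norm, so `τ` local steps stay within `η τ ‖∇Fᵢ(w)‖` of `w`, and by the three-point
inequality `Fᵢ(x) - Fᵢ(z) ≤ ⟪∇Fᵢ(y), x - z⟫ + L/2 ‖x - y‖²` the client moves closer to `w*`: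
`‖wᵢ^{(τ)} - w*‖² ≤ ‖w - w*‖² - 2ητ (Fᵢ(w) - Fᵢ(w*)) + (7/6) (ητ)² ‖∇Fᵢ(w)‖²`.
Co-coercivity of the gradients and `∑ᵢ ∇Fᵢ(w*) = 0` give
`∑ᵢ ‖∇Fᵢ(w)‖² ≤ 4L ∑ᵢ (Fᵢ(w) - Fᵢ(w*)) + 2 ∑ᵢ ‖∇Fᵢ(w*)‖²`, and `ητL ≤ 1/6` absorbs the first
term. The condition on `η_g` makes the extrapolated server step at least `η_g` times as good as
the average client step, and the resulting one-round inequality telescopes. The argument gives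
the bound with the constants `1` and `3` in place of `3` and `9`, and without the last term.
-/

open Set Finset
open scoped InnerProductSpace

variable {E : Type*} [NormedAddCommGroup E] [InnerProductSpace ℝ E]

theorem norm_sub_smul_average_sub_sq_le {M : ℕ} (hM : 0 < M) (w z : E) (Δ : Fin M → E)
    {η : ℝ} (hη : 0 ≤ η) (hηΔ : M * η * ‖(1 / (M : ℝ)) • ∑ i, Δ i‖ ^ 2 ≤ ∑ i, ‖Δ i‖ ^ 2) :
    ‖w - η • (1 / (M : ℝ)) • ∑ i, Δ i - z‖ ^ 2 ≤
      ‖w - z‖ ^ 2 + η / M * ∑ i, (‖w - Δ i - z‖ ^ 2 - ‖w - z‖ ^ 2) := by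
  set Δbar := (1 / (M : ℝ)) • ∑ i, Δ i
  have hM' : (0 : ℝ) < M := by exact_mod_cast hM
  have hexpand : ∀ u : E, ‖w - u - z‖ ^ 2 = ‖w - z‖ ^ 2 - 2 * ⟪u, w - z⟫_ℝ + ‖u‖ ^ 2 := by
    intro u
    rw [show w - u - z = (w - z) - u by abel, norm_sub_sq_real, real_inner_comm]
  have hsum : η / M * ∑ i, (‖w - Δ i - z‖ ^ 2 - ‖w - z‖ ^ 2) =
      -2 * ⟪η • Δbar, w - z⟫_ℝ + η / M * ∑ i, ‖Δ i‖ ^ 2 := by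
    have hi : ∀ i, ‖w - Δ i - z‖ ^ 2 - ‖w - z‖ ^ 2 = -2 * ⟪Δ i, w - z⟫_ℝ + ‖Δ i‖ ^ 2 :=
      fun i => by rw [hexpand]; ring
    simp only [hi, sum_add_distrib, ← mul_sum, Δbar, real_inner_smul_left, sum_inner]
    ring
  have hquad : ‖η • Δbar‖ ^ 2 ≤ η / M * ∑ i, ‖Δ i‖ ^ 2 := by
    rw [norm_smul, Real.norm_of_nonneg hη, mul_pow]
    calc η ^ 2 * ‖Δbar‖ ^ 2 = η / M * (M * η * ‖Δbar‖ ^ 2) := by field_simp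
      _ ≤ η / M * ∑ i, ‖Δ i‖ ^ 2 := by gcongr
  rw [hexpand, hsum]
  linarith

section SmoothConvex

variable [CompleteSpace E] {f : E → ℝ} {L : ℝ}

theorem hasDerivAt_comp_add_smul (hf : Differentiable ℝ f) (x h : E) (t : ℝ) :
    HasDerivAt (fun s : ℝ => f (x + s • h)) ⟪gradient f (x + t • h), h⟫_ℝ t := by
  have hline : HasDerivAt (fun s : ℝ => x + s • h) h t := by
    simpa using ((hasDerivAt_id t).smul_const h).const_add x
  simpa [Function.comp_def] using
    (hf (x + t • h)).hasGradientAt.hasFDerivAt.comp_hasDerivAt t hline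

theorem le_add_inner_gradient_add_sq (hf : Differentiable ℝ f)
    (hL : ∀ a b, ‖gradient f a - gradient f b‖ ≤ L * ‖a - b‖) (x y : E) :
    f y ≤ f x + ⟪gradient f x, y - x⟫_ℝ + L / 2 * ‖y - x‖ ^ 2 := by
  set h := y - x
  set φ : ℝ → ℝ := fun t => f (x + t • h) - t * ⟪gradient f x, h⟫_ℝ - L / 2 * t ^ 2 * ‖h‖ ^ 2
  have hφ : ∀ t, HasDerivAt φ
      (⟪gradient f (x + t • h), h⟫_ℝ - ⟪gradient f x, h⟫_ℝ - L * t * ‖h‖ ^ 2) t := fun t =>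
    (((hasDerivAt_comp_add_smul hf x h t).sub ((hasDerivAt_id' t).mul_const _)).sub
      (((hasDerivAt_pow 2 t).const_mul (L / 2)).mul_const (‖h‖ ^ 2))).congr_deriv (by ring)
  have hanti : AntitoneOn φ (Icc 0 1) := by
    refine antitoneOn_of_deriv_nonpos (convex_Icc 0 1)
      (fun t _ => (hφ t).continuousAt.continuousWithinAt)
      (fun t _ => (hφ t).differentiableAt.differentiableWithinAt) fun t ht => ?_
    rw [interior_Icc] at ht
    have hlip : ‖gradient f (x + t • h) - gradient f x‖ ≤ L * (t * ‖h‖) := by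
      simpa [norm_smul, abs_of_pos ht.1] using hL (x + t • h) x
    have hcs := real_inner_le_norm (gradient f (x + t • h) - gradient f x) h
    rw [inner_sub_left] at hcs
    rw [(hφ t).deriv]
    nlinarith [mul_le_mul_of_nonneg_right hlip (norm_nonneg h)]
  have h01 := hanti (left_mem_Icc.2 zero_le_one) (right_mem_Icc.2 zero_le_one) zero_le_one
  have hφ0 : φ 0 = f x := by simp only [φ, zero_smul, add_zero]; ring
  have hφ1 : φ 1 = f y - ⟪gradient f x, y - x⟫_ℝ - L / 2 * ‖y - x‖ ^ 2 := by
    simp only [φ, h, one_smul, add_sub_cancel]; ring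
  linarith

theorem ConvexOn.add_inner_gradient_le (hc : ConvexOn ℝ univ f) (hf : Differentiable ℝ f)
    (x y : E) : f x + ⟪gradient f x, y - x⟫_ℝ ≤ f y := by
  have hline : ConvexOn ℝ univ fun t : ℝ => f (x + t • (y - x)) :=
    (hc.comp_affineMap (AffineMap.lineMap x y)).congr fun t _ => by
      simp [AffineMap.lineMap_apply_module', add_comm]
  have hslope := hline.le_slope_of_hasDerivAt (mem_univ 0) (mem_univ 1) one_pos
    (by simpa only [zero_smul, add_zero] using hasDerivAt_comp_add_smul hf x (y - x) 0)
  rw [slope_def_field, one_smul, zero_smul, add_zero, add_sub_cancel, sub_zero, div_one]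
    at hslope
  linarith

theorem ConvexOn.sub_le_inner_gradient_add_sq (hc : ConvexOn ℝ univ f)
    (hf : Differentiable ℝ f) (hL : ∀ a b, ‖gradient f a - gradient f b‖ ≤ L * ‖a - b‖)
    (x y z : E) : f x - f z ≤ ⟪gradient f y, x - z⟫_ℝ + L / 2 * ‖x - y‖ ^ 2 := by
  have hdesc := le_add_inner_gradient_add_sq hf hL y x
  have hconv := hc.add_inner_gradient_le hf y z
  rw [show x - z = (x - y) - (z - y) by abel, inner_sub_right]
  linarith

theorem ConvexOn.norm_gradient_sub_sq_le (hc : ConvexOn ℝ univ f) (hf : Differentiable ℝ f)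
    (hL0 : 0 < L) (hL : ∀ a b, ‖gradient f a - gradient f b‖ ≤ L * ‖a - b‖) (x y : E) :
    ‖gradient f x - gradient f y‖ ^ 2 ≤ 2 * L * (f x - f y - ⟪gradient f y, x - y⟫_ℝ) := by
  set v := gradient f x - gradient f y
  -- `z` is the gradient step from `x` for `f - ⟪∇f y, ·⟫`, which is minimal at `y`.
  set z := x - L⁻¹ • v
  have hdesc := le_add_inner_gradient_add_sq hf hL x z
  have hconv := hc.add_inner_gradient_le hf y z
  rw [show z - x = -(L⁻¹ • v) by simp [z]] at hdesc
  rw [show z - y = (x - y) - L⁻¹ • v by simp only [z]; abel] at hconv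
  rw [inner_neg_right, real_inner_smul_right, norm_neg, norm_smul, Real.norm_eq_abs,
    abs_of_pos (inv_pos.2 hL0)] at hdesc
  rw [inner_sub_right, real_inner_smul_right] at hconv
  have hv : ⟪gradient f x, v⟫_ℝ - ⟪gradient f y, v⟫_ℝ = ‖v‖ ^ 2 := by
    rw [← inner_sub_left, real_inner_self_eq_norm_sq]
  have key : ‖v‖ ^ 2 / (2 * L) ≤ f x - f y - ⟪gradient f y, x - y⟫_ℝ := by
    have hsq : L / 2 * (L⁻¹ * ‖v‖) ^ 2 = L⁻¹ * ‖v‖ ^ 2 - ‖v‖ ^ 2 / (2 * L) := by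
      field_simp; ring
    have hv' : L⁻¹ * ⟪gradient f x, v⟫_ℝ - L⁻¹ * ⟪gradient f y, v⟫_ℝ = L⁻¹ * ‖v‖ ^ 2 := by
      rw [← mul_sub, hv]
    linarith
  rwa [div_le_iff₀' (by positivity)] at key

theorem ConvexOn.norm_gradient_sub_sq_le_inner (hc : ConvexOn ℝ univ f)
    (hf : Differentiable ℝ f) (hL0 : 0 < L)
    (hL : ∀ a b, ‖gradient f a - gradient f b‖ ≤ L * ‖a - b‖) (x y : E) :
    ‖gradient f x - gradient f y‖ ^ 2 ≤ L * ⟪gradient f x - gradient f y, x - y⟫_ℝ := by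
  have hxy := hc.norm_gradient_sub_sq_le hf hL0 hL x y
  have hyx := hc.norm_gradient_sub_sq_le hf hL0 hL y x
  rw [norm_sub_rev] at hyx
  rw [inner_sub_left, show y - x = -(x - y) by abel, inner_neg_right] at *
  linarith

theorem ConvexOn.norm_gradient_sub_smul_gradient_le (hc : ConvexOn ℝ univ f)
    (hf : Differentiable ℝ f) (hL0 : 0 < L)
    (hL : ∀ a b, ‖gradient f a - gradient f b‖ ≤ L * ‖a - b‖) {η : ℝ} (hη : 0 < η)
    (hηL : η * L ≤ 2) (x : E) :
    ‖gradient f (x - η • gradient f x)‖ ≤ ‖gradient f x‖ := by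
  set g := gradient f x
  set h := gradient f (x - η • g)
  have hcoco := hc.norm_gradient_sub_sq_le_inner hf hL0 hL x (x - η • g)
  rw [sub_sub_cancel, real_inner_smul_right] at hcoco
  have hpos : 0 ≤ ⟪g - h, g⟫_ℝ := by
    refine nonneg_of_mul_nonneg_right (a := L * η) ?_ (by positivity)
    simpa only [mul_assoc] using (sq_nonneg _).trans hcoco
  have hsq : ‖h‖ ^ 2 = ‖g‖ ^ 2 - 2 * ⟪g - h, g⟫_ℝ + ‖g - h‖ ^ 2 := by
    rw [show h = g - (g - h) by abel, norm_sub_sq_real, sub_sub_cancel, real_inner_comm]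
  refine (pow_le_pow_iff_left₀ (norm_nonneg _) (norm_nonneg _) two_ne_zero).1 ?_
  nlinarith [mul_nonneg (sub_nonneg.2 hηL) hpos]

section GradientDescent

variable {x : ℕ → E} {η : ℝ} {n : ℕ}

theorem sub_gd_iterate_eq_smul_sum (hx : ∀ k < n, x (k + 1) = x k - η • gradient f (x k))
    {k : ℕ} (hk : k ≤ n) : x 0 - x k = η • ∑ j ∈ range k, gradient f (x j) := by
  induction k with
  | zero => simp
  | succ k ih =>
    rw [hx k hk, sum_range_succ, smul_add, ← ih (Nat.le_of_succ_le hk)]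
    abel

theorem ConvexOn.norm_gradient_gd_iterate_le (hc : ConvexOn ℝ univ f)
    (hf : Differentiable ℝ f) (hL0 : 0 < L)
    (hL : ∀ a b, ‖gradient f a - gradient f b‖ ≤ L * ‖a - b‖) (hη : 0 < η) (hηL : η * L ≤ 2)
    (hx : ∀ k < n, x (k + 1) = x k - η • gradient f (x k)) {k : ℕ} (hk : k ≤ n) :
    ‖gradient f (x k)‖ ≤ ‖gradient f (x 0)‖ := by
  induction k with
  | zero => rfl
  | succ k ih =>
    rw [hx k hk]
    exact (hc.norm_gradient_sub_smul_gradient_le hf hL0 hL hη hηL _).trans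
      (ih (Nat.le_of_succ_le hk))

theorem ConvexOn.norm_sub_gd_iterate_le (hc : ConvexOn ℝ univ f)
    (hf : Differentiable ℝ f) (hL0 : 0 < L)
    (hL : ∀ a b, ‖gradient f a - gradient f b‖ ≤ L * ‖a - b‖) (hη : 0 < η) (hηL : η * L ≤ 2)
    (hx : ∀ k < n, x (k + 1) = x k - η • gradient f (x k)) {k : ℕ} (hk : k ≤ n) :
    ‖x 0 - x k‖ ≤ η * k * ‖gradient f (x 0)‖ := by
  rw [sub_gd_iterate_eq_smul_sum hx hk, norm_smul, Real.norm_of_nonneg hη.le, mul_assoc]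
  gcongr
  calc ‖∑ j ∈ range k, gradient f (x j)‖ ≤ ∑ j ∈ range k, ‖gradient f (x j)‖ := norm_sum_le _ _
    _ ≤ ∑ _j ∈ range k, ‖gradient f (x 0)‖ := sum_le_sum fun j hj =>
        hc.norm_gradient_gd_iterate_le hf hL0 hL hη hηL hx
          ((mem_range.1 hj).le.trans hk)
    _ = k * ‖gradient f (x 0)‖ := by simp

theorem ConvexOn.norm_gd_iterate_sub_sq_le (hc : ConvexOn ℝ univ f)
    (hf : Differentiable ℝ f) (hL0 : 0 < L)
    (hL : ∀ a b, ‖gradient f a - gradient f b‖ ≤ L * ‖a - b‖) (hη : 0 < η) (hηL : η * L ≤ 2)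
    (hx : ∀ k < n, x (k + 1) = x k - η • gradient f (x k)) (z : E) :
    ‖x n - z‖ ^ 2 ≤ ‖x 0 - z‖ ^ 2 - 2 * η * n * (f (x 0) - f z) +
      (1 + η * L * n) * (η * n) ^ 2 * ‖gradient f (x 0)‖ ^ 2 := by
  set R := η * n * ‖gradient f (x 0)‖
  have hdrift : ∀ k ≤ n, ‖x 0 - x k‖ ^ 2 ≤ R ^ 2 := fun k hk => by
    refine pow_le_pow_left₀ (norm_nonneg _)
      ((hc.norm_sub_gd_iterate_le hf hL0 hL hη hηL hx hk).trans ?_) 2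
    have : (k : ℝ) ≤ n := by exact_mod_cast hk
    unfold R
    gcongr
  have hinner : η * n * (f (x 0) - f z) - η * n * (L / 2 * R ^ 2) ≤
      ⟪x 0 - x n, x 0 - z⟫_ℝ := by
    rw [sub_gd_iterate_eq_smul_sum hx le_rfl, real_inner_smul_left, sum_inner, mul_assoc,
      mul_assoc, ← mul_sub]
    gcongr
    calc (n : ℝ) * (f (x 0) - f z) - n * (L / 2 * R ^ 2)
        = ∑ _k ∈ range n, (f (x 0) - f z - L / 2 * R ^ 2) := by
          rw [sum_const, card_range, nsmul_eq_mul]; ring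
      _ ≤ ∑ k ∈ range n, ⟪gradient f (x k), x 0 - z⟫_ℝ := sum_le_sum fun k hk => by
        have := hc.sub_le_inner_gradient_add_sq hf hL (x 0) (x k) z
        nlinarith [hdrift k (mem_range.1 hk).le]
  have hstep := hdrift n le_rfl
  rw [show x n - z = (x 0 - z) - (x 0 - x n) by abel, norm_sub_sq_real, real_inner_comm]
  nlinarith

end GradientDescent

section Federated

variable {ι : Type*} [Fintype ι] {F : ι → E → ℝ}

theorem sum_gradient_eq_zero_of_forall_sum_le {z : E} (hF : ∀ i, DifferentiableAt ℝ (F i) z)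
    (hz : ∀ y, ∑ i, F i z ≤ ∑ i, F i y) : ∑ i, gradient (F i) z = 0 := by
  have hmin : IsLocalMin (fun y => ∑ i, F i y) z := Filter.Eventually.of_forall hz
  have hfd := hmin.hasFDerivAt_eq_zero (HasFDerivAt.fun_sum fun i _ => (hF i).hasFDerivAt)
  apply (InnerProductSpace.toDual ℝ E).injective
  rw [map_sum, map_zero, ← hfd]
  exact sum_congr rfl fun i _ => toDual_gradient

theorem sum_norm_gradient_sq_le (hc : ∀ i, ConvexOn ℝ univ (F i))
    (hF : ∀ i, Differentiable ℝ (F i)) (hL0 : 0 < L)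
    (hL : ∀ i a b, ‖gradient (F i) a - gradient (F i) b‖ ≤ L * ‖a - b‖) {z : E}
    (hz : ∑ i, gradient (F i) z = 0) (w : E) :
    ∑ i, ‖gradient (F i) w‖ ^ 2 ≤
      4 * L * ∑ i, (F i w - F i z) + 2 * ∑ i, ‖gradient (F i) z‖ ^ 2 := by
  have hpoint : ∀ i, ‖gradient (F i) w‖ ^ 2 ≤
      4 * L * (F i w - F i z - ⟪gradient (F i) z, w - z⟫_ℝ) + 2 * ‖gradient (F i) z‖ ^ 2 :=
    fun i => by
      have hcoco := (hc i).norm_gradient_sub_sq_le (hF i) hL0 (hL i) w z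
      have hpar := norm_add_sq_real (gradient (F i) w - gradient (F i) z) (gradient (F i) z)
      have hsub := norm_sub_sq_real (gradient (F i) w - gradient (F i) z) (gradient (F i) z)
      rw [sub_add_cancel] at hpar
      nlinarith [norm_nonneg (gradient (F i) w - gradient (F i) z - gradient (F i) z)]
  have hinner : ∑ i, ⟪gradient (F i) z, w - z⟫_ℝ = 0 := by rw [← sum_inner, hz, inner_zero_left]
  calc ∑ i, ‖gradient (F i) w‖ ^ 2
      ≤ ∑ i, (4 * L * (F i w - F i z - ⟪gradient (F i) z, w - z⟫_ℝ) +
          2 * ‖gradient (F i) z‖ ^ 2) := sum_le_sum fun i _ => hpoint i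
    _ = 4 * L * ∑ i, (F i w - F i z) + 2 * ∑ i, ‖gradient (F i) z‖ ^ 2 := by
      simp only [sum_add_distrib, ← mul_sum, sum_sub_distrib, hinner, sub_zero]

theorem sum_norm_local_gd_sub_sq_le (hc : ∀ i, ConvexOn ℝ univ (F i))
    (hF : ∀ i, Differentiable ℝ (F i)) (hL0 : 0 < L)
    (hL : ∀ i a b, ‖gradient (F i) a - gradient (F i) b‖ ≤ L * ‖a - b‖) {η : ℝ} (hη : 0 < η)
    {τ : ℕ} (hτ : 0 < τ) (hητL : η * τ * L ≤ 1 / 6) {z : E}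
    (hz : ∀ y, ∑ i, F i z ≤ ∑ i, F i y) (w : E) (x : ι → ℕ → E) (hx0 : ∀ i, x i 0 = w)
    (hx : ∀ i, ∀ k < τ, x i (k + 1) = x i k - η • gradient (F i) (x i k)) :
    ∑ i, (‖x i τ - z‖ ^ 2 - ‖w - z‖ ^ 2) ≤
      -(η * τ) * ∑ i, (F i w - F i z) + 3 * (η * τ) ^ 2 * ∑ i, ‖gradient (F i) z‖ ^ 2 := by
  have hτ1 : (1 : ℝ) ≤ τ := by exact_mod_cast hτ
  have hηL : η * L ≤ 2 := by nlinarith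
  have hclient : ∀ i, ‖x i τ - z‖ ^ 2 - ‖w - z‖ ^ 2 ≤
      -2 * (η * τ) * (F i w - F i z) + 7 / 6 * (η * τ) ^ 2 * ‖gradient (F i) w‖ ^ 2 := by
    intro i
    have h := (hc i).norm_gd_iterate_sub_sq_le (hF i) hL0 (hL i) hη hηL (hx i) z
    rw [hx0 i] at h
    nlinarith [mul_le_mul_of_nonneg_right hητL
      (by positivity : 0 ≤ (η * τ) ^ 2 * ‖gradient (F i) w‖ ^ 2)]
  have hhet := sum_norm_gradient_sq_le hc hF hL0 hL
    (sum_gradient_eq_zero_of_forall_sum_le (fun i => (hF i).differentiableAt) hz) w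
  have hgap : 0 ≤ ∑ i, (F i w - F i z) := by rw [sum_sub_distrib]; exact sub_nonneg.2 (hz w)
  have hσ : 0 ≤ ∑ i, ‖gradient (F i) z‖ ^ 2 := by positivity
  calc ∑ i, (‖x i τ - z‖ ^ 2 - ‖w - z‖ ^ 2)
      ≤ ∑ i, (-2 * (η * τ) * (F i w - F i z) +
          7 / 6 * (η * τ) ^ 2 * ‖gradient (F i) w‖ ^ 2) := sum_le_sum fun i _ => hclient i
    _ = -2 * (η * τ) * ∑ i, (F i w - F i z) +
          7 / 6 * (η * τ) ^ 2 * ∑ i, ‖gradient (F i) w‖ ^ 2 := by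
      rw [sum_add_distrib, ← mul_sum, ← mul_sum]
    _ ≤ _ := by
      have hητ : 0 ≤ η * τ := by positivity
      nlinarith [mul_le_mul_of_nonneg_left hhet (by positivity : 0 ≤ (η * τ) ^ 2),
        mul_le_mul_of_nonneg_right hητL (mul_nonneg hητ hgap)]

end Federated

theorem fedexp_round_le {M : ℕ} (hM : 0 < M) {F : Fin M → E → ℝ}
    (hc : ∀ i, ConvexOn ℝ univ (F i)) (hF : ∀ i, Differentiable ℝ (F i)) (hL0 : 0 < L)
    (hL : ∀ i a b, ‖gradient (F i) a - gradient (F i) b‖ ≤ L * ‖a - b‖) {η : ℝ} (hη : 0 < η)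
    {τ : ℕ} (hτ : 0 < τ) (hητL : η * τ * L ≤ 1 / 6) {z : E}
    (hz : ∀ y, ∑ i, F i z ≤ ∑ i, F i y) (w : E) (x : Fin M → ℕ → E) (hx0 : ∀ i, x i 0 = w)
    (hx : ∀ i, ∀ k < τ, x i (k + 1) = x i k - η • gradient (F i) (x i k))
    (Δ : Fin M → E) (hΔ : ∀ i, Δ i = w - x i τ) {ηg : ℝ} (hηg : 0 ≤ ηg)
    (hηgΔ : M * ηg * ‖(1 / (M : ℝ)) • ∑ i, Δ i‖ ^ 2 ≤ ∑ i, ‖Δ i‖ ^ 2) :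
    ‖w - ηg • (1 / (M : ℝ)) • ∑ i, Δ i - z‖ ^ 2 ≤
      ‖w - z‖ ^ 2 - ηg * (η * τ) * (1 / M * ∑ i, (F i w - F i z)) +
        ηg * (3 * (η * τ) ^ 2) * (1 / M * ∑ i, ‖gradient (F i) z‖ ^ 2) := by
  have hserver := norm_sub_smul_average_sub_sq_le hM w z Δ hηg hηgΔ
  have hclients := sum_norm_local_gd_sub_sq_le hc hF hL0 hL hη hτ hητL hz w x hx0 hx
  have hmove : ∀ i, w - Δ i = x i τ := fun i => by rw [hΔ, sub_sub_cancel]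
  simp only [hmove, div_eq_mul_one_div ηg] at hserver
  nlinarith [mul_le_mul_of_nonneg_left hclients (by positivity : 0 ≤ ηg * (1 / M))]

end SmoothConvex

theorem mul_sum_le_add_mul_sum_of_le_sub_add {a g D : ℕ → ℝ} {c e : ℝ} {T : ℕ}
    (h : ∀ t < T, a (t + 1) ≤ a t - c * (g t * D t) + e * g t) (haT : 0 ≤ a T) :
    c * ∑ t ∈ range T, g t * D t ≤ a 0 + e * ∑ t ∈ range T, g t := by
  have hsum : ∑ t ∈ range T, c * (g t * D t) ≤ ∑ t ∈ range T, (a t - a (t + 1) + e * g t) :=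
    sum_le_sum fun t ht => by linarith [h t (mem_range.1 ht)]
  rw [sum_add_distrib, sum_range_sub', ← mul_sum, ← mul_sum] at hsum
  linarith

theorem div_le_div_mul_add_of_mul_le_add {a b c e A : ℝ} (hc : 0 < c) (hA : 0 ≤ A)
    (he : 0 ≤ e) (h : c * b ≤ a + c * e * A) : b / A ≤ a / (c * A) + e := by
  rcases hA.eq_or_lt with rfl | hA
  · simpa using he
  rw [div_le_iff₀ hA, show (a / (c * A) + e) * A = a / c + e * A by field_simp,
    ← sub_le_iff_le_add, le_div_iff₀ hc]
  linarith

theorem fedexp_convex_convergence_general {d M : ℕ} (hM : 0 < M)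
    (F : Fin M → EuclideanSpace ℝ (Fin d) → ℝ)
    (Fbar : EuclideanSpace ℝ (Fin d) → ℝ)
    (hFbar : ∀ w, Fbar w = (1 / (M : ℝ)) * ∑ i, F i w)
    (L ηl σstar : ℝ) (τ T : ℕ)
    (hconv : ∀ i, ConvexOn ℝ Set.univ (F i)) (hdiff : ∀ i, Differentiable ℝ (F i))
    (hsmooth : ∀ i, ∀ w w' : EuclideanSpace ℝ (Fin d),
      ‖gradient (F i) w - gradient (F i) w'‖ ≤ L * ‖w - w'‖)
    (wstar : EuclideanSpace ℝ (Fin d)) (hmin : ∀ w, Fbar wstar ≤ Fbar w)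
    (hσ : (1 / (M : ℝ)) * ∑ i, ‖gradient (F i) wstar‖ ^ 2 ≤ σstar ^ 2)
    (hηl : 0 < ηl) (hηlL : ηl ≤ 1 / (6 * τ * L))
    (w : ℕ → EuclideanSpace ℝ (Fin d))
    (wloc : ℕ → Fin M → ℕ → EuclideanSpace ℝ (Fin d))
    (hwloc0 : ∀ t < T, ∀ i, wloc t i 0 = w t)
    (hwlocrec : ∀ t < T, ∀ i, ∀ k < τ,
      wloc t i (k + 1) = wloc t i k - ηl • gradient (F i) (wloc t i k))
    (Δ : ℕ → Fin M → EuclideanSpace ℝ (Fin d))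
    (hΔ : ∀ t < T, ∀ i, Δ t i = w t - wloc t i τ)
    (Δbar : ℕ → EuclideanSpace ℝ (Fin d))
    (hΔbar : ∀ t < T, Δbar t = (1 / (M : ℝ)) • ∑ i, Δ t i)
    (ηg : ℕ → ℝ) (hηg1 : ∀ t < T, 1 ≤ ηg t)
    (hηgub : ∀ t < T, (M : ℝ) * ηg t * ‖Δbar t‖ ^ 2 ≤ ∑ i, ‖Δ t i‖ ^ 2)
    (hwrec : ∀ t < T, w (t + 1) = w t - ηg t • Δbar t) :
    (∑ t ∈ Finset.range T, ηg t * (Fbar (w t) - Fbar wstar)) /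
        (∑ t ∈ Finset.range T, ηg t) ≤
      3 * ‖w 0 - wstar‖ ^ 2 / (ηl * τ * ∑ t ∈ Finset.range T, ηg t) +
        9 * ηl * τ * σstar ^ 2 + 36 * ηl ^ 2 * τ * (τ - 1) * L * σstar ^ 2 := by
  have hstep : 0 < 6 * τ * L := one_div_pos.1 (hηl.trans_le hηlL)
  have hτ : 0 < τ := Nat.pos_of_ne_zero fun h => by simp [h] at hstep
  have hL : 0 < L := pos_of_mul_pos_right hstep (by positivity)
  have hηlτ : 0 < ηl * τ := mul_pos hηl (by exact_mod_cast hτ)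
  have hητL : ηl * τ * L ≤ 1 / 6 := by rw [le_div_iff₀ hstep] at hηlL; linarith
  have hz : ∀ y, ∑ i, F i wstar ≤ ∑ i, F i y := fun y =>
    le_of_mul_le_mul_left (by simpa only [hFbar] using hmin y) (by positivity)
  have hηg : ∀ t < T, 0 ≤ ηg t := fun t ht => zero_le_one.trans (hηg1 t ht)
  have hround : ∀ t < T, ‖w (t + 1) - wstar‖ ^ 2 ≤ ‖w t - wstar‖ ^ 2 -
      ηl * τ * (ηg t * (Fbar (w t) - Fbar wstar)) +
        ηl * τ * (3 * ηl * τ * σstar ^ 2) * ηg t := by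
    intro t ht
    have h := fedexp_round_le hM hconv hdiff hL hsmooth hηl hτ hητL hz (w t) (wloc t)
      (hwloc0 t ht) (hwlocrec t ht) (Δ t) (hΔ t ht) (hηg t ht) (hΔbar t ht ▸ hηgub t ht)
    rw [← hΔbar t ht, ← hwrec t ht, sum_sub_distrib, mul_sub, ← hFbar, ← hFbar] at h
    nlinarith [mul_le_mul_of_nonneg_left hσ
      (mul_nonneg (hηg t ht) (by positivity) : 0 ≤ ηg t * (3 * (ηl * τ) ^ 2))]
  have hA : 0 ≤ ∑ t ∈ range T, ηg t := sum_nonneg fun t ht => hηg t (mem_range.1 ht)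
  have htel := mul_sum_le_add_mul_sum_of_le_sub_add (a := fun t => ‖w t - wstar‖ ^ 2) hround
    (sq_nonneg _)
  have hbound := div_le_div_mul_add_of_mul_le_add hηlτ hA (by positivity) htel
  have hdist : 0 ≤ ‖w 0 - wstar‖ ^ 2 / (ηl * τ * ∑ t ∈ range T, ηg t) :=
    div_nonneg (sq_nonneg _) (mul_nonneg hηlτ.le hA)
  have hdrift : 0 ≤ 36 * ηl ^ 2 * τ * (τ - 1) * L * σstar ^ 2 := by
    have : (0 : ℝ) ≤ τ - 1 := sub_nonneg.2 (by exact_mod_cast hτ)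
    positivity
  have hnoise : 0 ≤ ηl * τ * σstar ^ 2 := by positivity
  rw [mul_div_assoc]
  linarith

/-- Theorem 1: convergence of FedExP for convex objectives, with explicit constants. -/
theorem fedexp_convex_convergence {d M : ℕ} (hM : 0 < M)
    (F : Fin M → EuclideanSpace ℝ (Fin d) → ℝ)
    (Fbar : EuclideanSpace ℝ (Fin d) → ℝ)
    (hFbar : ∀ w, Fbar w = (1 / (M : ℝ)) * ∑ i, F i w)
    (L ηl σstar : ℝ) (τ T : ℕ) (hτ : 1 ≤ τ)
    (hconv : ∀ i, ConvexOn ℝ Set.univ (F i)) (hdiff : ∀ i, Differentiable ℝ (F i))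
    (hsmooth : ∀ i, ∀ w w' : EuclideanSpace ℝ (Fin d),
      ‖gradient (F i) w - gradient (F i) w'‖ ≤ L * ‖w - w'‖)
    (wstar : EuclideanSpace ℝ (Fin d)) (hmin : ∀ w, Fbar wstar ≤ Fbar w)
    (hσ : (1 / (M : ℝ)) * ∑ i, ‖gradient (F i) wstar‖ ^ 2 ≤ σstar ^ 2)
    (hηl : 0 < ηl) (hηlL : ηl ≤ 1 / (6 * τ * L))
    (w : ℕ → EuclideanSpace ℝ (Fin d))
    (wloc : ℕ → Fin M → ℕ → EuclideanSpace ℝ (Fin d))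
    (hwloc0 : ∀ t < T, ∀ i, wloc t i 0 = w t)
    (hwlocrec : ∀ t < T, ∀ i, ∀ k < τ,
      wloc t i (k + 1) = wloc t i k - ηl • gradient (F i) (wloc t i k))
    (Δ : ℕ → Fin M → EuclideanSpace ℝ (Fin d))
    (hΔ : ∀ t < T, ∀ i, Δ t i = w t - wloc t i τ)
    (Δbar : ℕ → EuclideanSpace ℝ (Fin d))
    (hΔbar : ∀ t < T, Δbar t = (1 / (M : ℝ)) • ∑ i, Δ t i)
    (ηg : ℕ → ℝ) (hηg1 : ∀ t < T, 1 ≤ ηg t)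
    (hηgub : ∀ t < T, (M : ℝ) * ηg t * ‖Δbar t‖ ^ 2 ≤ ∑ i, ‖Δ t i‖ ^ 2)
    (hwrec : ∀ t < T, w (t + 1) = w t - ηg t • Δbar t) :
    (∑ t ∈ Finset.range T, ηg t * (Fbar (w t) - Fbar wstar)) /
        (∑ t ∈ Finset.range T, ηg t) ≤
      3 * ‖w 0 - wstar‖ ^ 2 / (ηl * τ * ∑ t ∈ Finset.range T, ηg t) +
        9 * ηl * τ * σstar ^ 2 + 36 * ηl ^ 2 * τ * (τ - 1) * L * σstar ^ 2 :=
  fedexp_convex_convergence_general hM F Fbar hFbar L ηl σstar τ T hconv hdiff hsmooth wstar hmin hσ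
    hηl hηlL w wloc hwloc0 hwlocrec Δ hΔ Δbar hΔbar ηg hηg1 hηgub hwrec
end

section
/- (Bounding client aggregate gradients.) Let F_1, …, F_M : ℝ^d → ℝ be convex, differentiable and L-smooth, let F = (1/M)Σ_{i=1}^M F_i, let w* be a minimizer of F, and assume (1/M) Σ_{i=1}^M ‖∇F_i(w*)‖² ≤ σ*². Let w^{(t)} ∈ ℝ^d and let w_i^{(t,k)} ∈ ℝ^d for i ∈ {1,…,M}, k ∈ {0,…,τ−1} be arbitrary points (in particular the local gradient descent iterates started at w^{(t)}). Then (1/M) Σ_{i=1}^M Σ_{k=0}^{τ−1} ‖∇F_i(w_i^{(t,k)})‖² ≤ (3L²/M) Σ_{i=1}^M Σ_{k=0}^{τ−1} ‖w_i^{(t,k)} − w^{(t)}‖² + 6τL(F(w^{(t)}) − F(w*)) + 3τσ*². -/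
/-!
Write `∇F_i(w_i^{(t,k)})` as `(∇F_i(w_i^{(t,k)}) - ∇F_i(w^{(t)})) + (∇F_i(w^{(t)}) - ∇F_i(w*)) + ∇F_i(w*)`
and use `‖a + b + c‖² ≤ 3 (‖a‖² + ‖b‖² + ‖c‖²)`. Smoothness bounds the first piece, `σ*` the
last, and cocoercivity of convex `L`-smooth functions, `‖∇f x - ∇f y‖² ≤ 2L D_f(x, y)` with `D_f`
the Bregman divergence, bounds the middle one. Averaged over the clients the divergences
`D_{F_i}(w^{(t)}, w*)` add up to `F(w^{(t)}) - F(w*)`, since `∇F(w*) = 0`.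
-/

open InnerProductSpace Set
open scoped Gradient

theorem norm_add_add_sq_le {E : Type*} [SeminormedAddCommGroup E] (a b c : E) :
    ‖a + b + c‖ ^ 2 ≤ 3 * (‖a‖ ^ 2 + ‖b‖ ^ 2 + ‖c‖ ^ 2) := by
  have := norm_add₃_le (a := a) (b := b) (c := c)
  nlinarith [norm_nonneg (a + b + c), sq_nonneg (‖a‖ - ‖b‖), sq_nonneg (‖a‖ - ‖c‖),
    sq_nonneg (‖b‖ - ‖c‖)]

section

variable {E : Type*} [NormedAddCommGroup E] [InnerProductSpace ℝ E] [CompleteSpace E]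

def GradientLipschitzWith (L : ℝ) (f : E → ℝ) : Prop :=
  ∀ x y, ‖∇ f x - ∇ f y‖ ≤ L * ‖x - y‖

noncomputable def bregmanDiv (f : E → ℝ) (x y : E) : ℝ :=
  f x - f y - ⟪∇ f y, x - y⟫_ℝ

variable {f : E → ℝ} {L : ℝ}

theorem Differentiable.hasDerivAt_apply_add_smul (hf : Differentiable ℝ f) (x v : E) (t : ℝ) :
    HasDerivAt (fun s : ℝ => f (x + s • v)) ⟪∇ f (x + t • v), v⟫_ℝ t := by
  have hline : HasDerivAt (fun s : ℝ => x + s • v) v t := by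
    simpa using ((hasDerivAt_id t).smul_const v).const_add x
  rw [inner_gradient_left]
  exact (hf _).hasFDerivAt.comp_hasDerivAt t hline

theorem ConvexOn.apply_add_inner_gradient_le (hc : ConvexOn ℝ univ f) (hf : Differentiable ℝ f)
    (x y : E) : f x + ⟪∇ f x, y - x⟫_ℝ ≤ f y := by
  have hline : ConvexOn ℝ univ (fun t : ℝ => f (x + t • (y - x))) := by
    simpa [Function.comp_def, AffineMap.lineMap_apply, add_comm]
      using hc.comp_affineMap (AffineMap.lineMap x y)
  have hderiv := hf.hasDerivAt_apply_add_smul x (y - x) 0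
  rw [zero_smul, add_zero] at hderiv
  have hslope := hline.le_slope_of_hasDerivAt (mem_univ 0) (mem_univ 1) one_pos hderiv
  simp only [slope_def_field, one_smul, zero_smul, add_zero, add_sub_cancel, sub_zero,
    div_one] at hslope
  linarith

theorem GradientLipschitzWith.apply_add_le (hL : GradientLipschitzWith L f)
    (hf : Differentiable ℝ f) (x v : E) :
    f (x + v) ≤ f x + ⟪∇ f x, v⟫_ℝ + L / 2 * ‖v‖ ^ 2 := by
  set φ : ℝ → ℝ := fun t => f (x + t • v) - t * ⟪∇ f x, v⟫_ℝ - t ^ 2 * (L / 2 * ‖v‖ ^ 2)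
  have hφ : ∀ t, HasDerivAt φ
      (⟪∇ f (x + t • v) - ∇ f x, v⟫_ℝ - t * (L * ‖v‖ ^ 2)) t := by
    intro t
    refine (((hf.hasDerivAt_apply_add_smul x v t).sub
      ((hasDerivAt_id' t).mul_const ⟪∇ f x, v⟫_ℝ)).sub
      ((hasDerivAt_pow 2 t).mul_const (L / 2 * ‖v‖ ^ 2))).congr_deriv ?_
    rw [inner_sub_left]
    push_cast
    ring
  have hanti : AntitoneOn φ (Icc 0 1) := by
    refine antitoneOn_of_deriv_nonpos (convex_Icc 0 1)
      (fun t _ => (hφ t).continuousAt.continuousWithinAt)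
      (fun t _ => (hφ t).differentiableAt.differentiableWithinAt) fun t ht => ?_
    rw [interior_Icc] at ht
    rw [(hφ t).deriv, sub_nonpos]
    calc ⟪∇ f (x + t • v) - ∇ f x, v⟫_ℝ ≤ ‖∇ f (x + t • v) - ∇ f x‖ * ‖v‖ :=
          real_inner_le_norm _ _
      _ ≤ L * ‖x + t • v - x‖ * ‖v‖ := by gcongr; exact hL _ _
      _ = t * (L * ‖v‖ ^ 2) := by
          rw [add_sub_cancel_left, norm_smul, Real.norm_of_nonneg ht.1.le]; ring
  have := hanti (left_mem_Icc.2 zero_le_one) (right_mem_Icc.2 zero_le_one) zero_le_one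
  simp only [φ, one_smul, zero_smul, add_zero, one_pow, one_mul, zero_mul, sub_zero,
    ne_eq, OfNat.ofNat_ne_zero, not_false_eq_true, zero_pow] at this
  linarith

/-- Taking one gradient step of length `1 / L` from `x` decreases `f` by at least
`‖∇ f x‖ ^ 2 / (2 L)`, and `f` cannot go below its minimum. -/
theorem GradientLipschitzWith.sq_norm_gradient_le_of_forall_le (hL : GradientLipschitzWith L f)
    (hf : Differentiable ℝ f) (hL0 : 0 < L) {y : E} (hy : ∀ z, f y ≤ f z) (x : E) :
    ‖∇ f x‖ ^ 2 ≤ 2 * L * (f x - f y) := by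
  have hstep := hL.apply_add_le hf x (-L⁻¹ • ∇ f x)
  have hcoef : L / 2 * ‖-L⁻¹ • ∇ f x‖ ^ 2 = L⁻¹ / 2 * ‖∇ f x‖ ^ 2 := by
    rw [norm_smul, mul_pow, Real.norm_eq_abs, sq_abs]
    field_simp
  rw [hcoef, inner_smul_right, real_inner_self_eq_norm_sq] at hstep
  have hgap : L⁻¹ * ‖∇ f x‖ ^ 2 ≤ 2 * (f x - f y) := by
    linarith [hy (x + -L⁻¹ • ∇ f x)]
  calc ‖∇ f x‖ ^ 2 = L * (L⁻¹ * ‖∇ f x‖ ^ 2) := by field_simp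
    _ ≤ L * (2 * (f x - f y)) := by gcongr
    _ = 2 * L * (f x - f y) := by ring

theorem gradient_sub_inner (hf : Differentiable ℝ f) (a w : E) :
    ∇ (fun z => f z - ⟪a, z⟫_ℝ) w = ∇ f w - a := by
  refine (hasGradientAt_iff_hasFDerivAt.2 ?_).gradient
  rw [map_sub, toDual_gradient]
  exact (hf w).hasFDerivAt.sub (innerSL ℝ a).hasFDerivAt

theorem GradientLipschitzWith.sq_norm_gradient_sub_le (hL : GradientLipschitzWith L f)
    (hc : ConvexOn ℝ univ f) (hf : Differentiable ℝ f) (x y : E) :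
    ‖∇ f x - ∇ f y‖ ^ 2 ≤ 2 * L * bregmanDiv f x y := by
  rcases le_or_gt L 0 with hL0 | hL0
  · have hzero : L * ‖x - y‖ = 0 :=
      le_antisymm (mul_nonpos_of_nonpos_of_nonneg hL0 (norm_nonneg _))
        ((norm_nonneg _).trans (hL x y))
    have hgrad : ‖∇ f x - ∇ f y‖ = 0 := le_antisymm ((hL x y).trans hzero.le) (norm_nonneg _)
    rcases mul_eq_zero.1 hzero with rfl | hxy
    · simp [hgrad]
    · obtain rfl : x = y := sub_eq_zero.1 (norm_eq_zero.1 hxy)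
      simp [bregmanDiv]
  -- `y` minimizes the tilted function `g`, whose gradient is `∇ f - ∇ f y`.
  set g : E → ℝ := fun z => f z - ⟪∇ f y, z⟫_ℝ
  have hgrad : ∀ w, ∇ g w = ∇ f w - ∇ f y := gradient_sub_inner hf _
  have hgd : Differentiable ℝ g := hf.sub (innerSL ℝ _).differentiable
  have hgc : ConvexOn ℝ univ g := hc.sub ((innerSL ℝ (∇ f y)).toLinearMap.concaveOn convex_univ)
  have hgL : GradientLipschitzWith L g := fun w w' => by
    simpa [hgrad] using hL w w'
  have hmin : ∀ z, g y ≤ g z := fun z => by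
    simpa [hgrad] using hgc.apply_add_inner_gradient_le hgd y z
  have := hgL.sq_norm_gradient_le_of_forall_le hgd hL0 hmin x
  rw [hgrad] at this
  convert this using 2
  simp only [bregmanDiv, g, inner_sub_right]
  ring

theorem GradientLipschitzWith.sq_norm_gradient_le (hL : GradientLipschitzWith L f)
    (hc : ConvexOn ℝ univ f) (hf : Differentiable ℝ f) (z x y : E) :
    ‖∇ f z‖ ^ 2 ≤ 3 * L ^ 2 * ‖z - x‖ ^ 2 + 6 * L * bregmanDiv f x y + 3 * ‖∇ f y‖ ^ 2 := by
  have hsplit : ∇ f z = (∇ f z - ∇ f x) + (∇ f x - ∇ f y) + ∇ f y := by abel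
  have hlip : ‖∇ f z - ∇ f x‖ ^ 2 ≤ L ^ 2 * ‖z - x‖ ^ 2 := by
    rw [← mul_pow]
    exact pow_le_pow_left₀ (norm_nonneg _) (hL z x) 2
  have := norm_add_add_sq_le (∇ f z - ∇ f x) (∇ f x - ∇ f y) (∇ f y)
  rw [← hsplit] at this
  linarith [hL.sq_norm_gradient_sub_le hc hf x y]

theorem bregmanDiv_eq_sub_of_forall_le {y : E} (hy : ∀ z, f y ≤ f z) (x : E) :
    bregmanDiv f x y = f x - f y := by
  have : ∇ f y = 0 := by
    simp [gradient, IsLocalMin.fderiv_eq_zero (Filter.Eventually.of_forall hy)]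
  simp [bregmanDiv, this]

theorem const_mul_sum_bregmanDiv {ι : Type*} [Fintype ι] {F : ι → E → ℝ}
    (hF : ∀ i, Differentiable ℝ (F i)) (c : ℝ) (x y : E) :
    c * ∑ i, bregmanDiv (F i) x y = bregmanDiv (fun w => c * ∑ i, F i w) x y := by
  have hderiv : HasFDerivAt (fun w => c * ∑ i, F i w) (c • ∑ i, fderiv ℝ (F i) y) y :=
    (HasFDerivAt.fun_sum fun i _ => (hF i y).hasFDerivAt).const_mul c
  simp only [bregmanDiv, inner_gradient_left, hderiv.fderiv, smul_apply,
    sum_apply, smul_eq_mul, Finset.sum_sub_distrib]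
  ring

end

theorem bounding_client_aggregate_gradients_general {d M : ℕ}
    (F : Fin M → EuclideanSpace ℝ (Fin d) → ℝ)
    (Fbar : EuclideanSpace ℝ (Fin d) → ℝ)
    (hFbar : ∀ w, Fbar w = (1 / (M : ℝ)) * ∑ i, F i w)
    (L σstar : ℝ) (τ : ℕ)
    (hconv : ∀ i, ConvexOn ℝ Set.univ (F i)) (hdiff : ∀ i, Differentiable ℝ (F i))
    (hsmooth : ∀ i, ∀ w w' : EuclideanSpace ℝ (Fin d),
      ‖gradient (F i) w - gradient (F i) w'‖ ≤ L * ‖w - w'‖)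
    (wstar : EuclideanSpace ℝ (Fin d)) (hmin : ∀ w, Fbar wstar ≤ Fbar w)
    (hσ : (1 / (M : ℝ)) * ∑ i, ‖gradient (F i) wstar‖ ^ 2 ≤ σstar ^ 2)
    (wt : EuclideanSpace ℝ (Fin d))
    (wloc : Fin M → ℕ → EuclideanSpace ℝ (Fin d)) :
    (1 / (M : ℝ)) * ∑ i, ∑ k ∈ Finset.range τ, ‖gradient (F i) (wloc i k)‖ ^ 2 ≤
      (3 * L ^ 2 / (M : ℝ)) * ∑ i, ∑ k ∈ Finset.range τ, ‖wloc i k - wt‖ ^ 2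
        + 6 * τ * L * (Fbar wt - Fbar wstar) + 3 * τ * σstar ^ 2 := by
  have hbregman : 1 / (M : ℝ) * ∑ i, bregmanDiv (F i) wt wstar = Fbar wt - Fbar wstar := by
    rw [const_mul_sum_bregmanDiv hdiff, ← funext hFbar, bregmanDiv_eq_sub_of_forall_le hmin]
  calc _ ≤ 1 / (M : ℝ) * ∑ i, ∑ k ∈ Finset.range τ, (3 * L ^ 2 * ‖wloc i k - wt‖ ^ 2
          + 6 * L * bregmanDiv (F i) wt wstar + 3 * ‖∇ (F i) wstar‖ ^ 2) := by
        gcongr with i _ k _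
        exact GradientLipschitzWith.sq_norm_gradient_le (hsmooth i) (hconv i) (hdiff i) _ _ _
    _ = (3 * L ^ 2 / (M : ℝ)) * ∑ i, ∑ k ∈ Finset.range τ, ‖wloc i k - wt‖ ^ 2
          + 6 * τ * L * (1 / (M : ℝ) * ∑ i, bregmanDiv (F i) wt wstar)
          + 3 * τ * (1 / (M : ℝ) * ∑ i, ‖∇ (F i) wstar‖ ^ 2) := by
        simp only [Finset.sum_add_distrib, Finset.sum_const, Finset.card_range, nsmul_eq_mul,
          ← Finset.mul_sum]
        ring
    _ ≤ _ := by
        rw [hbregman]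
        gcongr

/-- Bounding client aggregate gradients (Lemma 5 in the appendix). -/
theorem bounding_client_aggregate_gradients {d M : ℕ} (hM : 0 < M)
    (F : Fin M → EuclideanSpace ℝ (Fin d) → ℝ)
    (Fbar : EuclideanSpace ℝ (Fin d) → ℝ)
    (hFbar : ∀ w, Fbar w = (1 / (M : ℝ)) * ∑ i, F i w)
    (L σstar : ℝ) (τ : ℕ)
    (hconv : ∀ i, ConvexOn ℝ Set.univ (F i)) (hdiff : ∀ i, Differentiable ℝ (F i))
    (hsmooth : ∀ i, ∀ w w' : EuclideanSpace ℝ (Fin d),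
      ‖gradient (F i) w - gradient (F i) w'‖ ≤ L * ‖w - w'‖)
    (wstar : EuclideanSpace ℝ (Fin d)) (hmin : ∀ w, Fbar wstar ≤ Fbar w)
    (hσ : (1 / (M : ℝ)) * ∑ i, ‖gradient (F i) wstar‖ ^ 2 ≤ σstar ^ 2)
    (wt : EuclideanSpace ℝ (Fin d))
    (wloc : Fin M → ℕ → EuclideanSpace ℝ (Fin d)) :
    (1 / (M : ℝ)) * ∑ i, ∑ k ∈ Finset.range τ, ‖gradient (F i) (wloc i k)‖ ^ 2 ≤
      (3 * L ^ 2 / (M : ℝ)) * ∑ i, ∑ k ∈ Finset.range τ, ‖wloc i k - wt‖ ^ 2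
        + 6 * τ * L * (Fbar wt - Fbar wstar) + 3 * τ * σstar ^ 2 :=
  bounding_client_aggregate_gradients_general F Fbar hFbar L σstar τ hconv hdiff hsmooth wstar hmin
    hσ wt wloc
end

section
/- (Bounding client drift in the non-convex case.) Let F_1, …, F_M : ℝ^d → ℝ be differentiable and L-smooth, let F = (1/M)Σ_{i=1}^M F_i, and assume (1/M) Σ_{i=1}^M ‖∇F_i(w) − ∇F(w)‖² ≤ σ_g² for all w ∈ ℝ^d. Fix τ ≥ 1 and 0 < η_l ≤ 1/(6τL). Given w^{(t)} ∈ ℝ^d, define local full-batch gradient descent iterates w_i^{(t,0)} = w^{(t)}, w_i^{(t,k+1)} = w_i^{(t,k)} − η_l ∇F_i(w_i^{(t,k)}) for k = 0,…,τ−1, and the normalized gradients h_i^{(t)} = (1/τ) Σ_{k=0}^{τ−1} ∇F_i(w_i^{(t,k)}). Then (1/M) Σ_{i=1}^M ‖∇F_i(w^{(t)}) − h_i^{(t)}‖² ≤ (1/8)‖∇F(w^{(t)})‖² + 5 η_l² L² τ(τ−1) σ_g². -/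
/-!
Under `6 ηl τ L ≤ 1`, induction with `L`-smoothness keeps the `k`-th local iterate within
`2 ηl k ‖∇Fᵢ(w)‖` of `w`, so averaging the smoothness bound over `k < τ` gives
`‖∇Fᵢ(w) - hᵢ‖ ≤ ηl L (τ - 1) ‖∇Fᵢ(w)‖`. Square, average over the clients and split
`‖∇Fᵢ(w)‖² ≤ 2 ‖∇Fᵢ(w) - ∇F(w)‖² + 2 ‖∇F(w)‖²`; the constants close because
`2 (ηl L (τ - 1))² ≤ 2 / 36 ≤ 1 / 8` and `(τ - 1)² ≤ τ (τ - 1)`.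
-/

open Finset

section

variable {E : Type*} [SeminormedAddCommGroup E]

theorem norm_sq_le_two_mul_norm_sub_sq_add (a b : E) :
    ‖a‖ ^ 2 ≤ 2 * ‖a - b‖ ^ 2 + 2 * ‖b‖ ^ 2 :=
  calc ‖a‖ ^ 2 ≤ (‖a - b‖ + ‖b‖) ^ 2 := by
        gcongr; linarith [norm_le_norm_add_norm_sub' a b]
    _ ≤ 2 * ‖a - b‖ ^ 2 + 2 * ‖b‖ ^ 2 := by linarith [add_sq_le (a := ‖a - b‖) (b := ‖b‖)]

theorem mean_norm_sq_le_two_mul_mean_norm_sub_sq_add {ι : Type*} (s : Finset ι) (a : ι → E)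
    (b : E) :
    (1 / (#s : ℝ)) * ∑ i ∈ s, ‖a i‖ ^ 2 ≤
      2 * ((1 / (#s : ℝ)) * ∑ i ∈ s, ‖a i - b‖ ^ 2) + 2 * ‖b‖ ^ 2 := by
  have hmean_const : (1 / (#s : ℝ)) * ∑ _i ∈ s, 2 * ‖b‖ ^ 2 ≤ 2 * ‖b‖ ^ 2 := by
    rw [sum_const, nsmul_eq_mul, ← mul_assoc, one_div_mul_eq_div]
    exact mul_le_of_le_one_left (by positivity) (div_self_le_one _)
  calc (1 / (#s : ℝ)) * ∑ i ∈ s, ‖a i‖ ^ 2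
      ≤ (1 / (#s : ℝ)) * ∑ i ∈ s, (2 * ‖a i - b‖ ^ 2 + 2 * ‖b‖ ^ 2) := by
        gcongr with i; exact norm_sq_le_two_mul_norm_sub_sq_add _ _
    _ ≤ 2 * ((1 / (#s : ℝ)) * ∑ i ∈ s, ‖a i - b‖ ^ 2) + 2 * ‖b‖ ^ 2 := by
        rw [sum_add_distrib, mul_add, ← mul_sum]
        linarith

theorem sum_range_natCast (n : ℕ) : ∑ k ∈ range n, (k : ℝ) = n * (n - 1) / 2 := by
  induction n with
  | zero => simp
  | succ n ih => rw [sum_range_succ, ih]; push_cast; ring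

variable [NormedSpace ℝ E] {g : E → E} {L η : ℝ} {τ : ℕ} {w : ℕ → E}

theorem norm_descent_iterate_sub_le (hL : 0 ≤ L) (hη : 0 ≤ η)
    (hg : ∀ x y, ‖g x - g y‖ ≤ L * ‖x - y‖) (hηLτ : 2 * η * L * τ ≤ 1)
    (hw : ∀ k < τ, w (k + 1) = w k - η • g (w k)) :
    ∀ k ≤ τ, ‖w k - w 0‖ ≤ 2 * η * k * ‖g (w 0)‖ := by
  intro k hk
  induction k with
  | zero => simp
  | succ m ih =>
    have hm : m < τ := hk
    have hstep : ‖w (m + 1) - w 0‖ ≤ ‖w m - w 0‖ + η * ‖g (w m)‖ := by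
      rw [hw m hm, sub_right_comm, ← norm_smul_of_nonneg hη]
      exact norm_sub_le _ _
    have hgrad : ‖g (w m)‖ ≤ ‖g (w 0)‖ + L * ‖w m - w 0‖ :=
      (norm_le_norm_add_norm_sub' _ _).trans (by gcongr; exact hg _ _)
    have hmL : 2 * η * L * m ≤ 1 := le_trans (by gcongr) hηLτ
    have hG : 0 ≤ η * ‖g (w 0)‖ := mul_nonneg hη (norm_nonneg _)
    push_cast
    linarith [ih hm.le, mul_le_mul_of_nonneg_left (ih hm.le) (mul_nonneg hη hL),
      mul_le_mul_of_nonneg_left hgrad hη, mul_le_mul_of_nonneg_left hmL hG]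

theorem norm_sub_average_descent_le (hτ : 0 < τ) (hL : 0 ≤ L) (hη : 0 ≤ η)
    (hg : ∀ x y, ‖g x - g y‖ ≤ L * ‖x - y‖) (hηLτ : 2 * η * L * τ ≤ 1)
    (hw : ∀ k < τ, w (k + 1) = w k - η • g (w k)) :
    ‖g (w 0) - (1 / (τ : ℝ)) • ∑ k ∈ range τ, g (w k)‖ ≤ η * L * (τ - 1) * ‖g (w 0)‖ := by
  have hτ' : (0 : ℝ) < τ := by exact_mod_cast hτ
  have hrepr : g (w 0) - (1 / (τ : ℝ)) • ∑ k ∈ range τ, g (w k) =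
      (1 / (τ : ℝ)) • ∑ k ∈ range τ, (g (w 0) - g (w k)) := by
    rw [sum_sub_distrib, sum_const, card_range, smul_sub, ← Nat.cast_smul_eq_nsmul ℝ, smul_smul,
      one_div_mul_cancel hτ'.ne', one_smul]
  have hterm : ∀ k ∈ range τ, ‖g (w 0) - g (w k)‖ ≤ 2 * η * L * ‖g (w 0)‖ * k := fun k hk =>
    calc ‖g (w 0) - g (w k)‖ ≤ L * ‖w k - w 0‖ := by rw [norm_sub_rev (w k)]; exact hg _ _
      _ ≤ L * (2 * η * k * ‖g (w 0)‖) := by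
        gcongr
        exact norm_descent_iterate_sub_le hL hη hg hηLτ hw k (mem_range.mp hk).le
      _ = 2 * η * L * ‖g (w 0)‖ * k := by ring
  calc ‖g (w 0) - (1 / (τ : ℝ)) • ∑ k ∈ range τ, g (w k)‖
      = (1 / (τ : ℝ)) * ‖∑ k ∈ range τ, (g (w 0) - g (w k))‖ := by
        rw [hrepr, norm_smul_of_nonneg (by positivity)]
    _ ≤ (1 / (τ : ℝ)) * ∑ k ∈ range τ, 2 * η * L * ‖g (w 0)‖ * k := by
        gcongr
        exact (norm_sum_le _ _).trans (sum_le_sum hterm)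
    _ = η * L * (τ - 1) * ‖g (w 0)‖ := by
        rw [← mul_sum, sum_range_natCast]
        field_simp

end

theorem bounding_client_drift_nonconvex_general {d M : ℕ}
    (F : Fin M → EuclideanSpace ℝ (Fin d) → ℝ)
    (Fbar : EuclideanSpace ℝ (Fin d) → ℝ)
    (L ηl σg : ℝ) (τ : ℕ)
    (hsmooth : ∀ i, ∀ w w' : EuclideanSpace ℝ (Fin d),
      ‖gradient (F i) w - gradient (F i) w'‖ ≤ L * ‖w - w'‖)
    (hσg : ∀ w : EuclideanSpace ℝ (Fin d),
      (1 / (M : ℝ)) * ∑ i, ‖gradient (F i) w - gradient Fbar w‖ ^ 2 ≤ σg ^ 2)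
    (hηl : 0 < ηl) (hηlL : ηl ≤ 1 / (6 * τ * L))
    (wt : EuclideanSpace ℝ (Fin d))
    (wloc : Fin M → ℕ → EuclideanSpace ℝ (Fin d))
    (hwloc0 : ∀ i, wloc i 0 = wt)
    (hwlocrec : ∀ i, ∀ k < τ,
      wloc i (k + 1) = wloc i k - ηl • gradient (F i) (wloc i k))
    (h : Fin M → EuclideanSpace ℝ (Fin d))
    (hh : ∀ i, h i = (1 / (τ : ℝ)) • ∑ k ∈ Finset.range τ, gradient (F i) (wloc i k)) :
    (1 / (M : ℝ)) * ∑ i, ‖gradient (F i) wt - h i‖ ^ 2 ≤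
      (1 / 8) * ‖gradient Fbar wt‖ ^ 2 + 5 * ηl ^ 2 * L ^ 2 * τ * (τ - 1) * σg ^ 2 := by
  -- `1 / 0 = 0`, so the step-size bound together with `0 < ηl` forces `0 < τ` and `0 < L`.
  have hτL : 0 < 6 * (τ : ℝ) * L := one_div_pos.mp (hηl.trans_le hηlL)
  have hL : 0 < L := pos_of_mul_pos_right hτL (by positivity)
  have hτ : 0 < τ := by
    exact_mod_cast pos_of_mul_pos_right (pos_of_mul_pos_left hτL hL.le) (by norm_num)
  have hηLτ : 6 * (ηl * L * τ) ≤ 1 := by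
    rw [le_div_iff₀ hτL] at hηlL; linarith
  set c := ηl * L * (τ - 1)
  have hdrift : ∀ i, ‖gradient (F i) wt - h i‖ ≤ c * ‖gradient (F i) wt‖ := fun i => by
    rw [hh i, ← hwloc0 i]
    exact norm_sub_average_descent_le hτ hL.le hηl.le (hsmooth i) (by linarith) (hwlocrec i)
  have hτ1 : (1 : ℝ) ≤ τ := by exact_mod_cast hτ
  have hc0 : 0 ≤ c := mul_nonneg (mul_nonneg hηl.le hL.le) (by linarith)
  have hc_sq : c ^ 2 ≤ ηl ^ 2 * L ^ 2 * τ * (τ - 1) :=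
    calc c ^ 2 = (ηl * L) ^ 2 * (τ - 1) * (τ - 1) := by ring
      _ ≤ (ηl * L) ^ 2 * (τ - 1) * τ := by gcongr; linarith
      _ = ηl ^ 2 * L ^ 2 * τ * (τ - 1) := by ring
  have hc_small : 2 * c ^ 2 ≤ 1 / 8 := by nlinarith [mul_pos hηl hL]
  have hmean := mean_norm_sq_le_two_mul_mean_norm_sub_sq_add univ (fun i => gradient (F i) wt)
    (gradient Fbar wt)
  rw [card_univ, Fintype.card_fin] at hmean
  calc (1 / (M : ℝ)) * ∑ i, ‖gradient (F i) wt - h i‖ ^ 2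
      ≤ (1 / (M : ℝ)) * ∑ i, c ^ 2 * ‖gradient (F i) wt‖ ^ 2 := by
        gcongr with i
        rw [← mul_pow]
        gcongr
        exact hdrift i
    _ = c ^ 2 * ((1 / (M : ℝ)) * ∑ i, ‖gradient (F i) wt‖ ^ 2) := by rw [← mul_sum]; ring
    _ ≤ c ^ 2 * (2 * σg ^ 2 + 2 * ‖gradient Fbar wt‖ ^ 2) := by
        gcongr
        linarith [hσg wt]
    _ ≤ (1 / 8) * ‖gradient Fbar wt‖ ^ 2 + 5 * ηl ^ 2 * L ^ 2 * τ * (τ - 1) * σg ^ 2 := by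
        nlinarith [mul_le_mul_of_nonneg_right hc_sq (sq_nonneg σg),
          mul_le_mul_of_nonneg_right hc_small (sq_nonneg ‖gradient Fbar wt‖)]

/-- Bounding client drift in the non-convex case (Lemma 7 in the appendix). -/
theorem bounding_client_drift_nonconvex {d M : ℕ} (hM : 0 < M)
    (F : Fin M → EuclideanSpace ℝ (Fin d) → ℝ)
    (Fbar : EuclideanSpace ℝ (Fin d) → ℝ)
    (hFbar : ∀ w, Fbar w = (1 / (M : ℝ)) * ∑ i, F i w)
    (L ηl σg : ℝ) (τ : ℕ) (hτ : 1 ≤ τ)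
    (hdiff : ∀ i, Differentiable ℝ (F i))
    (hsmooth : ∀ i, ∀ w w' : EuclideanSpace ℝ (Fin d),
      ‖gradient (F i) w - gradient (F i) w'‖ ≤ L * ‖w - w'‖)
    (hσg : ∀ w : EuclideanSpace ℝ (Fin d),
      (1 / (M : ℝ)) * ∑ i, ‖gradient (F i) w - gradient Fbar w‖ ^ 2 ≤ σg ^ 2)
    (hηl : 0 < ηl) (hηlL : ηl ≤ 1 / (6 * τ * L))
    (wt : EuclideanSpace ℝ (Fin d))
    (wloc : Fin M → ℕ → EuclideanSpace ℝ (Fin d))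
    (hwloc0 : ∀ i, wloc i 0 = wt)
    (hwlocrec : ∀ i, ∀ k < τ,
      wloc i (k + 1) = wloc i k - ηl • gradient (F i) (wloc i k))
    (h : Fin M → EuclideanSpace ℝ (Fin d))
    (hh : ∀ i, h i = (1 / (τ : ℝ)) • ∑ k ∈ Finset.range τ, gradient (F i) (wloc i k)) :
    (1 / (M : ℝ)) * ∑ i, ‖gradient (F i) wt - h i‖ ^ 2 ≤
      (1 / 8) * ‖gradient Fbar wt‖ ^ 2 + 5 * ηl ^ 2 * L ^ 2 * τ * (τ - 1) * σg ^ 2 :=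
  bounding_client_drift_nonconvex_general F Fbar L ηl σg τ hsmooth hσg hηl hηlL wt wloc hwloc0
    hwlocrec h hh
end

section
/- (Gradient descent on overparameterized linear regression converges to the projection.) Let n ≤ d and let A be a real n×d matrix admitting a decomposition A = U Σ₁ V₁ᵀ where U is an n×n orthogonal matrix, Σ₁ is an n×n invertible diagonal matrix, V₁ is a d×n matrix with V₁ᵀV₁ = I_n, V₂ is a d×(d−n) matrix with V₂ᵀV₂ = I_{d−n}, V₁ᵀV₂ = 0, and V₁V₁ᵀ + V₂V₂ᵀ = I_d. Let b ∈ ℝ^n, let λ_max denote the largest eigenvalue of AᵀA, and fix a step size 0 < η_l ≤ 1/λ_max. Define iterates w^{(0)} = w and w^{(t+1)} = w^{(t)} − η_l (AᵀA w^{(t)} − Aᵀ b). Then w^{(T)} converges as T → ∞ to V₂V₂ᵀ w + V₁ Σ₁⁻¹ Uᵀ b, the Euclidean projection of w onto the set S* = { V₂V₂ᵀ x + V₁ Σ₁⁻¹ Uᵀ b : x ∈ ℝ^d } of minimizers of w′ ↦ ‖Aw′ − b‖². -/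
/-!
With `M = AᵀA = V₁ Σ₁² V₁ᵀ`, the point `w* = V₂V₂ᵀ w + V₁ Σ₁⁻¹ Uᵀ b` solves the normal equations
`M w* = Aᵀ b`, so the error `w⁽ᵗ⁾ - w*` is `(I - η M)ᵗ (w - w*)`. Since `V₁V₁ᵀ + V₂V₂ᵀ = I`, the
initial error `w - w*` lies in the range of `V₁`, on which `I - η M` acts as `diag (1 - η σᵢ²)`.
Each `σᵢ²` is an eigenvalue of `M` (with eigenvector the `i`-th column of `V₁`), hence
`0 < σᵢ² ≤ λ_max`, so `|1 - η σᵢ²| < 1` and the error tends to `0`.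
-/

open Matrix Filter Topology Module.End

namespace Matrix

variable {ι κ : Type*} [Fintype ι] [Fintype κ] [DecidableEq ι] [DecidableEq κ]

theorem pow_mul_eq_mul_pow_of_mul_eq {R : Type*} [Semiring R] {X : Matrix ι ι R}
    {Y : Matrix κ κ R} {V : Matrix ι κ R} (h : X * V = V * Y) (t : ℕ) :
    X ^ t * V = V * Y ^ t := by
  induction t with
  | zero => simp
  | succ t ih =>
    rw [pow_succ, Matrix.mul_assoc, h, ← Matrix.mul_assoc, ih, Matrix.mul_assoc, ← pow_succ]

theorem one_sub_smul_mul_eq_mul_diagonal {R : Type*} [CommRing R] {M : Matrix ι ι R}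
    {V : Matrix ι κ R} {μ : κ → R} (h : M * V = V * diagonal μ) (η : R) :
    (1 - η • M) * V = V * diagonal (fun i => 1 - η * μ i) := by
  have : diagonal (fun i => 1 - η * μ i) = 1 - η • diagonal μ := by
    rw [← diagonal_one, ← diagonal_smul, diagonal_sub]; rfl
  rw [this, Matrix.sub_mul, Matrix.mul_sub, Matrix.one_mul, Matrix.mul_one, Matrix.smul_mul,
    Matrix.mul_smul, h]

theorem mem_spectrum_of_mul_eq_mul_diagonal {K : Type*} [Field K] {M : Matrix ι ι K}
    {V : Matrix ι κ K} {L : Matrix κ ι K} {μ : κ → K} (hL : L * V = 1)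
    (h : M * V = V * diagonal μ) (i : κ) : μ i ∈ spectrum K M := by
  rw [← spectrum_toLin', ← hasEigenvalue_iff_mem_spectrum]
  refine hasEigenvalue_of_hasEigenvector (x := V *ᵥ Pi.single i 1) ⟨?_, fun h0 => ?_⟩
  · have hdiag : diagonal μ *ᵥ Pi.single i 1 = μ i • Pi.single i 1 := by
      ext j; rcases eq_or_ne j i with rfl | hji <;> simp [*]
    rw [mem_eigenspace_iff, toLin'_apply, mulVec_mulVec, h, ← mulVec_mulVec, hdiag, mulVec_smul]
  · have := congrArg (L *ᵥ ·) h0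
    simp only [mulVec_mulVec, hL, one_mulVec, mulVec_zero] at this
    simpa using congrFun this i

theorem IsHermitian.le_iSup_eigenvalues_of_mem_spectrum {𝕜 : Type*} [RCLike 𝕜]
    {A : Matrix ι ι 𝕜} (hA : A.IsHermitian) {μ : ℝ} (hμ : μ ∈ spectrum ℝ A) :
    μ ≤ ⨆ i, hA.eigenvalues i := by
  obtain ⟨j, rfl⟩ := hA.spectrum_real_eq_range_eigenvalues ▸ hμ
  exact le_ciSup (Set.finite_range _).bddAbove j

theorem tendsto_diagonal_pow_mulVec_nhds_zero {r : ι → ℝ} (hr : ∀ i, |r i| < 1) (c : ι → ℝ) :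
    Tendsto (fun t : ℕ => diagonal r ^ t *ᵥ c) atTop (𝓝 0) := by
  simp only [diagonal_pow, mulVec_diagonal, tendsto_pi_nhds, Pi.pow_apply, Pi.zero_apply]
  exact fun i => by simpa using (tendsto_pow_atTop_nhds_zero_of_abs_lt_one (hr i)).mul_const (c i)

theorem gradientDescent_sub_eq_pow_mulVec {R : Type*} [CommRing R] (M : Matrix ι ι R)
    {g xstar : ι → R} (hfix : M *ᵥ xstar = g) (η : R) {x : ℕ → ι → R}
    (hx : ∀ t, x (t + 1) = x t - η • (M *ᵥ x t - g)) (t : ℕ) :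
    x t - xstar = (1 - η • M) ^ t *ᵥ (x 0 - xstar) := by
  induction t with
  | zero => simp
  | succ t ih =>
    rw [hx, pow_succ', ← mulVec_mulVec, ← ih, ← hfix, ← mulVec_sub, sub_mulVec, one_mulVec,
      smul_mulVec]
    abel

theorem sub_add_mulVec_eq_mulVec {m k k' d R : Type*} [Fintype m] [Fintype k] [Fintype k']
    [Fintype d] [DecidableEq d] [CommRing R] {V1 : Matrix d k R} {V2 : Matrix d k' R}
    (hVV : V1 * V1ᵀ + V2 * V2ᵀ = 1) (P : Matrix k m R) (w : d → R) (b : m → R) :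
    w - ((V2 * V2ᵀ) *ᵥ w + (V1 * P) *ᵥ b) = V1 *ᵥ (V1ᵀ *ᵥ w - P *ᵥ b) := by
  rw [mulVec_sub, mulVec_mulVec, mulVec_mulVec, sub_eq_iff_eq_add]
  nth_rw 1 [← one_mulVec w, ← hVV, add_mulVec]
  abel

section ThinSVD

variable {m k d R : Type*} [Fintype m] [Fintype k] [DecidableEq k] [CommRing R]
  {A : Matrix m d R} {U : Matrix m k R} {σ : k → R} {V1 : Matrix d k R}

theorem transpose_mul_self_eq_of_eq_mul_diagonal_mul (hA : A = U * diagonal σ * V1ᵀ)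
    (hU : Uᵀ * U = 1) : Aᵀ * A = V1 * diagonal (fun i => σ i ^ 2) * V1ᵀ := by
  have hσ : diagonal (fun i => σ i ^ 2) = diagonal σ * diagonal σ := by
    simp only [diagonal_mul_diagonal, sq]
  simp only [hA, transpose_mul, transpose_transpose, diagonal_transpose, hσ, Matrix.mul_assoc]
  rw [← Matrix.mul_assoc Uᵀ, hU, Matrix.one_mul]

variable [Fintype d] {k' : Type*} [Fintype k'] {V2 : Matrix d k' R}

theorem transpose_mul_self_mulVec_eq_transpose_mulVec (hA : A = U * diagonal σ * V1ᵀ)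
    (hU : Uᵀ * U = 1) (hσ : IsUnit (diagonal σ).det) (hV1 : V1ᵀ * V1 = 1) (hV12 : V1ᵀ * V2 = 0)
    (w : d → R) (b : m → R) :
    (Aᵀ * A) *ᵥ ((V2 * V2ᵀ) *ᵥ w + (V1 * (diagonal σ)⁻¹ * Uᵀ) *ᵥ b) = Aᵀ *ᵥ b := by
  have hcancel : diagonal σ * (diagonal σ)⁻¹ = 1 := mul_nonsing_inv _ hσ
  have hAT : Aᵀ = V1 * diagonal σ * Uᵀ := by
    rw [hA, transpose_mul, transpose_mul, transpose_transpose, diagonal_transpose, Matrix.mul_assoc]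
  rw [mulVec_add, mulVec_mulVec, mulVec_mulVec, transpose_mul_self_eq_of_eq_mul_diagonal_mul hA hU]
  have hgram_V2 : V1 * diagonal (fun i => σ i ^ 2) * V1ᵀ * (V2 * V2ᵀ) = 0 := by
    rw [Matrix.mul_assoc, ← Matrix.mul_assoc V1ᵀ, hV12, Matrix.zero_mul, Matrix.mul_zero]
  have hgram_pinv : V1 * diagonal (fun i => σ i ^ 2) * V1ᵀ * (V1 * (diagonal σ)⁻¹ * Uᵀ) = Aᵀ := by
    simp only [hAT, sq, ← diagonal_mul_diagonal, Matrix.mul_assoc]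
    rw [← Matrix.mul_assoc V1ᵀ, hV1, Matrix.one_mul, ← Matrix.mul_assoc (diagonal σ) (diagonal σ)⁻¹,
      hcancel, Matrix.one_mul]
  rw [hgram_V2, hgram_pinv, zero_mulVec, zero_add]

end ThinSVD

end Matrix

theorem abs_one_sub_mul_lt_one {η s lam : ℝ} (hη : 0 < η) (hs : 0 < s) (hslam : s ≤ lam)
    (hηlam : η ≤ 1 / lam) : |1 - η * s| < 1 := by
  have hlam : 0 < lam := hs.trans_le hslam
  have : η * s ≤ 1 := calc
    η * s ≤ η * lam := by gcongr
    _ ≤ 1 := (le_div_iff₀ hlam).mp hηlam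
  rw [abs_lt]; constructor <;> nlinarith

theorem linear_regression_gd_converges_to_projection_general {n d : ℕ}
    (A : Matrix (Fin n) (Fin d) ℝ) (U S1 : Matrix (Fin n) (Fin n) ℝ)
    (V1 : Matrix (Fin d) (Fin n) ℝ) (V2 : Matrix (Fin d) (Fin (d - n)) ℝ)
    (hU2 : Uᵀ * U = 1)
    (hS1diag : ∃ σ : Fin n → ℝ, S1 = Matrix.diagonal σ) (hS1inv : IsUnit S1.det)
    (hV1 : V1ᵀ * V1 = 1) (hV12 : V1ᵀ * V2 = 0)
    (hVV : V1 * V1ᵀ + V2 * V2ᵀ = 1)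
    (hA : A = U * S1 * V1ᵀ)
    (b : Fin n → ℝ)
    (hH : (Aᵀ * A).IsHermitian) (lamMax : ℝ) (hlam : lamMax = ⨆ i, hH.eigenvalues i)
    (ηl : ℝ) (hηl : 0 < ηl) (hηlam : ηl ≤ 1 / lamMax)
    (w : Fin d → ℝ) (wseq : ℕ → (Fin d → ℝ)) (hw0 : wseq 0 = w)
    (hwrec : ∀ t : ℕ,
      wseq (t + 1) = wseq t - ηl • ((Aᵀ * A).mulVec (wseq t) - Aᵀ.mulVec b)) :
    Filter.Tendsto wseq Filter.atTop
      (nhds ((V2 * V2ᵀ).mulVec w + (V1 * S1⁻¹ * Uᵀ).mulVec b)) := by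
  obtain ⟨σ, rfl⟩ := hS1diag
  have hσ : ∀ i, σ i ≠ 0 := by
    simpa [det_diagonal, Finset.prod_ne_zero_iff] using hS1inv.ne_zero
  have hgramV1 : Aᵀ * A * V1 = V1 * diagonal (fun i => σ i ^ 2) := by
    rw [transpose_mul_self_eq_of_eq_mul_diagonal_mul hA hU2, Matrix.mul_assoc, hV1, Matrix.mul_one]
  have hcontract : ∀ i, |1 - ηl * σ i ^ 2| < 1 := fun i =>
    abs_one_sub_mul_lt_one hηl (pow_two_pos_of_ne_zero (hσ i))
      (hlam ▸ hH.le_iSup_eigenvalues_of_mem_spectrum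
        (mem_spectrum_of_mul_eq_mul_diagonal hV1 hgramV1 i)) hηlam
  set c := V1ᵀ *ᵥ w - ((diagonal σ)⁻¹ * Uᵀ) *ᵥ b
  have herror : ∀ t, wseq t - ((V2 * V2ᵀ) *ᵥ w + (V1 * (diagonal σ)⁻¹ * Uᵀ) *ᵥ b) =
      V1 *ᵥ (diagonal (fun i => 1 - ηl * σ i ^ 2) ^ t *ᵥ c) := fun t => by
    rw [gradientDescent_sub_eq_pow_mulVec _
        (transpose_mul_self_mulVec_eq_transpose_mulVec hA hU2 hS1inv hV1 hV12 w b) ηl hwrec,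
      hw0, Matrix.mul_assoc V1, sub_add_mulVec_eq_mulVec hVV, mulVec_mulVec,
      pow_mul_eq_mul_pow_of_mul_eq (one_sub_smul_mul_eq_mul_diagonal hgramV1 ηl), ← mulVec_mulVec]
  rw [← tendsto_sub_nhds_zero_iff, funext herror, ← mulVec_zero V1]
  exact ((continuous_const.matrix_mulVec continuous_id).tendsto 0).comp
    (tendsto_diagonal_pow_mulVec_nhds_zero hcontract _)

/-- Gradient descent on overparameterized linear regression with step size
`0 < η_l ≤ 1/λ_max(AᵀA)` converges to the Euclidean projection
`V₂V₂ᵀ w + V₁ Σ₁⁻¹ Uᵀ b` of the starting point `w` onto the set of minimizers. -/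
theorem linear_regression_gd_converges_to_projection {n d : ℕ} (hn : n ≤ d)
    (A : Matrix (Fin n) (Fin d) ℝ) (U S1 : Matrix (Fin n) (Fin n) ℝ)
    (V1 : Matrix (Fin d) (Fin n) ℝ) (V2 : Matrix (Fin d) (Fin (d - n)) ℝ)
    (hU1 : U * Uᵀ = 1) (hU2 : Uᵀ * U = 1)
    (hS1diag : ∃ σ : Fin n → ℝ, S1 = Matrix.diagonal σ) (hS1inv : IsUnit S1.det)
    (hV1 : V1ᵀ * V1 = 1) (hV2 : V2ᵀ * V2 = 1) (hV12 : V1ᵀ * V2 = 0)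
    (hVV : V1 * V1ᵀ + V2 * V2ᵀ = 1)
    (hA : A = U * S1 * V1ᵀ)
    (b : Fin n → ℝ)
    (hH : (Aᵀ * A).IsHermitian) (lamMax : ℝ) (hlam : lamMax = ⨆ i, hH.eigenvalues i)
    (ηl : ℝ) (hηl : 0 < ηl) (hηlam : ηl ≤ 1 / lamMax)
    (w : Fin d → ℝ) (wseq : ℕ → (Fin d → ℝ)) (hw0 : wseq 0 = w)
    (hwrec : ∀ t : ℕ,
      wseq (t + 1) = wseq t - ηl • ((Aᵀ * A).mulVec (wseq t) - Aᵀ.mulVec b)) :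
    Filter.Tendsto wseq Filter.atTop
      (nhds ((V2 * V2ᵀ).mulVec w + (V1 * S1⁻¹ * Uᵀ).mulVec b)) :=
  linear_regression_gd_converges_to_projection_general A U S1 V1 V2 hU2 hS1diag hS1inv hV1 hV12 hVV
    hA b hH lamMax hlam ηl hηl hηlam w wseq hw0 hwrec
end

section
/- (Extrapolation with server momentum.) Let w* ∈ ℝ^d, β ≥ 0, and for each round t ≥ 0 let Δ_1^{(t)}, …, Δ_M^{(t)} ∈ ℝ^d be given with Δ̄^{(t)} = (1/M) Σ_{i=1}^M Δ_i^{(t)} and m^{(t)} = (1/M) Σ_{i=1}^M ‖Δ_i^{(t)}‖². Define momentum v^{(−1)} = 0, v^{(t)} = Δ̄^{(t)} + β v^{(t−1)}, and iterates w^{(t+1)} = w^{(t)} − η_g^{(t)} v^{(t)} with η_g^{(t)} ≥ 0. Fix t ≥ 0 and assume: (a) ⟨w^{(s)} − w*, Δ̄^{(s)}⟩ ≥ m^{(s)} for all 0 ≤ s ≤ t; and (b) for every 0 ≤ r ≤ t−1, 2 η_g^{(r)} ‖v^{(r)}‖² ≤ m^{(r)} + Σ_{k=0}^{r−1} (β/2)^{r−k}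 m^{(k)}. Then ⟨w^{(t)} − w*, v^{(t)}⟩ ≥ m^{(t)} + Σ_{k=0}^{t−1} (β/2)^{t−k} m^{(k)}. -/
/-!
Induction on `t`. Since `v^{(t+1)} = Δ̄^{(t+1)} + β v^{(t)}` and
`w^{(t+1)} − w* = (w^{(t)} − w*) − η_g^{(t)} v^{(t)}`, the inner product at round `t + 1` is
`⟪w^{(t+1)} − w*, Δ̄^{(t+1)}⟫ + β (⟪w^{(t)} − w*, v^{(t)}⟫ − η_g^{(t)} ‖v^{(t)}‖²)`.
By the induction hypothesis and the step-size bound the bracket is at least half of the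
discounted sum at round `t`, and halving is exactly what the discount `β / 2` absorbs.
-/

open scoped RealInnerProductSpace
open Finset

def discountedSum (q : ℝ) (m : ℕ → ℝ) (t : ℕ) : ℝ :=
  m t + ∑ k ∈ range t, q ^ (t - k) * m k

theorem discountedSum_zero (q : ℝ) (m : ℕ → ℝ) : discountedSum q m 0 = m 0 := by
  simp [discountedSum]

theorem discountedSum_succ (q : ℝ) (m : ℕ → ℝ) (t : ℕ) :
    discountedSum q m (t + 1) = m (t + 1) + q * discountedSum q m t := by
  have hpow : ∀ k ∈ range t, q ^ (t + 1 - k) * m k = q * (q ^ (t - k) * m k) := by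
    intro k hk
    rw [Nat.sub_add_comm (mem_range.mp hk).le, pow_succ]
    ring
  rw [discountedSum, discountedSum, sum_range_succ, sum_congr rfl hpow, ← mul_sum,
    Nat.add_sub_cancel_left, pow_one]
  ring

section InnerProductSpace

variable {E : Type*} [NormedAddCommGroup E] [InnerProductSpace ℝ E]

theorem inner_sub_smul_add_smul (x u g : E) (η β : ℝ) :
    ⟪x - η • u, g + β • u⟫ = ⟪x - η • u, g⟫ + β * (⟪x, u⟫ - η * ‖u‖ ^ 2) := by
  rw [inner_add_right, real_inner_smul_right, inner_sub_left (z := u), real_inner_smul_left,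
    real_inner_self_eq_norm_sq]

theorem inner_momentum_step {x u g : E} {η β S m : ℝ} (hβ : 0 ≤ β) (hS : S ≤ ⟪x, u⟫)
    (hη : 2 * η * ‖u‖ ^ 2 ≤ S) (hg : m ≤ ⟪x - η • u, g⟫) :
    m + β / 2 * S ≤ ⟪x - η • u, g + β • u⟫ := by
  have hhalf : S / 2 ≤ ⟪x, u⟫ - η * ‖u‖ ^ 2 := by linarith
  rw [inner_sub_smul_add_smul]
  linarith [mul_le_mul_of_nonneg_left hhalf hβ]

theorem discountedSum_le_inner_momentum {β : ℝ} (hβ : 0 ≤ β) {g v w : ℕ → E} {η m : ℕ → ℝ}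
    (w₀ : E) (hv0 : v 0 = g 0) (hv : ∀ t, v (t + 1) = g (t + 1) + β • v t)
    (hw : ∀ t, w (t + 1) = w t - η t • v t) (t : ℕ)
    (hg : ∀ s ≤ t, m s ≤ ⟪w s - w₀, g s⟫)
    (hη : ∀ r < t, 2 * η r * ‖v r‖ ^ 2 ≤ discountedSum (β / 2) m r) :
    discountedSum (β / 2) m t ≤ ⟪w t - w₀, v t⟫ := by
  induction t with
  | zero => simpa [discountedSum_zero, hv0] using hg 0 le_rfl
  | succ t ih =>
    have hw' : w (t + 1) - w₀ = (w t - w₀) - η t • v t := by rw [hw]; abel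
    have hg' := hg (t + 1) le_rfl
    rw [hw'] at hg'
    rw [discountedSum_succ, hv, hw']
    exact inner_momentum_step hβ
      (ih (fun s hs => hg s (by omega)) (fun r hr => hη r (by omega))) (hη t (by omega)) hg'

end InnerProductSpace

theorem momentum_extrapolation_inner_bound_general {d : ℕ}
    (wstar : EuclideanSpace ℝ (Fin d)) (β : ℝ) (hβ : 0 ≤ β)
    (Δbar : ℕ → EuclideanSpace ℝ (Fin d))
    (m : ℕ → ℝ)
    (v : ℕ → EuclideanSpace ℝ (Fin d))
    (hv0 : v 0 = Δbar 0)
    (hvrec : ∀ t : ℕ, v (t + 1) = Δbar (t + 1) + β • v t)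
    (ηg : ℕ → ℝ)
    (w : ℕ → EuclideanSpace ℝ (Fin d))
    (hwrec : ∀ t : ℕ, w (t + 1) = w t - ηg t • v t)
    (t : ℕ)
    (ha : ∀ s ≤ t, ⟪w s - wstar, Δbar s⟫ ≥ m s)
    (hb : ∀ r < t, 2 * ηg r * ‖v r‖ ^ 2 ≤
      m r + ∑ k ∈ Finset.range r, (β / 2) ^ (r - k) * m k) :
    ⟪w t - wstar, v t⟫ ≥ m t + ∑ k ∈ Finset.range t, (β / 2) ^ (t - k) * m k :=
  discountedSum_le_inner_momentum hβ wstar hv0 hvrec hwrec t ha hb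

/-- Extrapolation with server momentum: under the per-round inner product condition and a bound
on the past server step sizes, the momentum direction `v^{(t)}` satisfies
`⟪w^{(t)} − w*, v^{(t)}⟫ ≥ m^{(t)} + Σ_{k<t} (β/2)^{t−k} m^{(k)}`. -/
theorem momentum_extrapolation_inner_bound {d M : ℕ} (hM : 0 < M)
    (wstar : EuclideanSpace ℝ (Fin d)) (β : ℝ) (hβ : 0 ≤ β)
    (Δ : ℕ → Fin M → EuclideanSpace ℝ (Fin d))
    (Δbar : ℕ → EuclideanSpace ℝ (Fin d))
    (hΔbar : ∀ t, Δbar t = (1 / (M : ℝ)) • ∑ i, Δ t i)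
    (m : ℕ → ℝ) (hm : ∀ t, m t = (1 / (M : ℝ)) * ∑ i, ‖Δ t i‖ ^ 2)
    (v : ℕ → EuclideanSpace ℝ (Fin d))
    (hv0 : v 0 = Δbar 0)
    (hvrec : ∀ t : ℕ, v (t + 1) = Δbar (t + 1) + β • v t)
    (ηg : ℕ → ℝ) (hηg : ∀ t, 0 ≤ ηg t)
    (w : ℕ → EuclideanSpace ℝ (Fin d))
    (hwrec : ∀ t : ℕ, w (t + 1) = w t - ηg t • v t)
    (t : ℕ)
    (ha : ∀ s ≤ t, ⟪w s - wstar, Δbar s⟫ ≥ m s)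
    (hb : ∀ r < t, 2 * ηg r * ‖v r‖ ^ 2 ≤
      m r + ∑ k ∈ Finset.range r, (β / 2) ^ (r - k) * m k) :
    ⟪w t - wstar, v t⟫ ≥ m t + ∑ k ∈ Finset.range t, (β / 2) ^ (t - k) * m k :=
  momentum_extrapolation_inner_bound_general wstar β hβ Δbar m v hv0 hvrec ηg w hwrec t ha hb
end
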